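/- arXiv:1707.01533 — 8 statements merged into one kernel-verified Lean document; each statement's English description precedes it below -/
import Mathlib

section
/- For every integer r ≥ 3, the limit π(K_{r,r}^{(r)}) = lim_{n→∞} ex(n, K_{r,r}^{(r)})/C(n,r) exists and equals r! · sup{λ(H) : H an intersecting r-graph}. -/
/-!
Lower bound: for an intersecting `r`-graph `H` and a weighting `p` of its vertices, the blow-up
of `H` with parts of sizes `⌊p i * n⌋` has about `λ(H, p) n^r` edges. It is `K_{r,r}^{(r)}`-free:
the two disjoint edges of a copy are mapped to intersecting edges of `H`, so they have vertices in
a common part, and the cross edge through these two vertices would meet that part twice.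

Upper bound: call a pair of vertices of a `K_{r,r}^{(r)}`-free `r`-graph `G` robust if it lies in
an edge avoiding any prescribed `|V(K_{r,r}^{(r)})|` vertices. Two disjoint edges all of whose
cross pairs are robust extend greedily to a copy of `K_{r,r}^{(r)}`. Hence in the subgraph `R` of
edges all of whose pairs are robust, any two disjoint edges contain a cross pair lying in no edge
of `R`. An optimal weighting of `R` of minimal support covers every pair of its support by an edge
of positive weight (Frankl–Rödl), so the edges inside the support are pairwise intersecting and
`λ(R)` is at most the intersecting supremum. The remaining edges contain a non-robust pair together
with one of at most `|V(K_{r,r}^{(r)})|` witnesses, so there are `O(n^{r-1})` of them.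
-/

open Finset

/-- The vertex type of the concrete representative of `K_{r,r}^{(r)}`. -/
abbrev KrrV (r : ℕ) := (Fin 2 × Fin r) ⊕ ((Fin r × Fin r) × Fin (r - 2))

/-- The `r`-graph `K_{r,r}^{(r)}`: the extension of two disjoint `r`-edges. -/
def Krr (r : ℕ) : Finset (Finset (KrrV r)) :=
  {(Finset.univ : Finset (Fin r)).image (fun i => Sum.inl ((0 : Fin 2), i)),
   (Finset.univ : Finset (Fin r)).image (fun i => Sum.inl ((1 : Fin 2), i))} ∪
  (Finset.univ : Finset (Fin r × Fin r)).image
    (fun uv => insert (Sum.inl ((0 : Fin 2), uv.1)) (insert (Sum.inl ((1 : Fin 2), uv.2))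
      ((Finset.univ : Finset (Fin (r - 2))).image (fun k => Sum.inr (uv, k)))))

/-- `G` is `F`-free. -/
def Free {γ δ : Type*} [DecidableEq γ] [DecidableEq δ]
    (F : Finset (Finset γ)) (G : Finset (Finset δ)) : Prop :=
  ¬ ∃ φ : γ → δ, Function.Injective φ ∧ ∀ e ∈ F, e.image φ ∈ G

/-- The Turán number `ex(n, F)`. -/
noncomputable def exNum (r n : ℕ) {γ : Type*} [DecidableEq γ] (F : Finset (Finset γ)) : ℕ :=
  sSup {m | ∃ G : Finset (Finset (Fin n)),
    (∀ e ∈ G, e.card = r) ∧ Free F G ∧ G.card = m}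

/-- The Lagrangian of an `r`-graph. -/
noncomputable def lagrangian {γ : Type*} [Fintype γ] (G : Finset (Finset γ)) : ℝ :=
  sSup {x : ℝ | ∃ p : γ → ℝ, (∀ v, 0 ≤ p v) ∧ (∀ v, p v ≤ 1) ∧ (∑ v, p v) = 1 ∧
    x = ∑ e ∈ G, ∏ v ∈ e, p v}

open Filter Topology

section Lagrangian

variable {γ : Type*} [Fintype γ]

def lagrangianPoly (G : Finset (Finset γ)) (p : γ → ℝ) : ℝ := ∑ e ∈ G, ∏ v ∈ e, p v

lemma lagrangian_eq_sSup_image (G : Finset (Finset γ)) :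
    lagrangian G = sSup (lagrangianPoly G '' stdSimplex ℝ γ) := by
  refine congrArg sSup (Set.ext fun x => ⟨?_, ?_⟩)
  · rintro ⟨p, h0, -, h1, rfl⟩
    exact ⟨p, ⟨h0, h1⟩, rfl⟩
  · rintro ⟨p, hp, rfl⟩
    exact ⟨p, hp.1, fun v => (mem_Icc_of_mem_stdSimplex hp v).2, hp.2, rfl⟩

variable {G : Finset (Finset γ)} {p : γ → ℝ}

lemma lagrangianPoly_le_exp_one (hp : p ∈ stdSimplex ℝ γ) : lagrangianPoly G p ≤ Real.exp 1 :=
  calc lagrangianPoly G p ≤ ∑ e ∈ univ.powerset, ∏ v ∈ e, p v :=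
        sum_le_sum_of_subset_of_nonneg (fun e _ => mem_powerset.2 (subset_univ e))
          fun _ _ _ => prod_nonneg fun v _ => hp.1 v
    _ = ∏ v, (p v + 1) := (prod_add_one _).symm
    _ ≤ ∏ v, Real.exp (p v) :=
        prod_le_prod (fun v _ => by linarith [hp.1 v]) fun v _ => Real.add_one_le_exp (p v)
    _ = Real.exp 1 := by rw [← Real.exp_sum, hp.2]

lemma lagrangianPoly_le_lagrangian (hp : p ∈ stdSimplex ℝ γ) :
    lagrangianPoly G p ≤ lagrangian G := by
  rw [lagrangian_eq_sSup_image]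
  exact le_csSup ⟨_, Set.forall_mem_image.2 fun _ => lagrangianPoly_le_exp_one⟩ ⟨p, hp, rfl⟩

lemma lagrangian_le_exp_one (G : Finset (Finset γ)) : lagrangian G ≤ Real.exp 1 := by
  rw [lagrangian_eq_sSup_image]
  exact Real.sSup_le (Set.forall_mem_image.2 fun _ => lagrangianPoly_le_exp_one) (Real.exp_pos 1).le

lemma lagrangian_of_isEmpty [IsEmpty γ] (G : Finset (Finset γ)) : lagrangian G = 0 := by
  rw [lagrangian_eq_sSup_image, stdSimplex_of_isEmpty_index, Set.image_empty, Real.sSup_empty]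

lemma IsMaxOn.lagrangian_eq (hp : p ∈ stdSimplex ℝ γ)
    (hmax : IsMaxOn (lagrangianPoly G) (stdSimplex ℝ γ) p) : lagrangian G = lagrangianPoly G p := by
  rw [lagrangian_eq_sSup_image]
  exact IsGreatest.csSup_eq ⟨⟨p, hp, rfl⟩, Set.forall_mem_image.2 fun _ hq => hmax hq⟩

lemma exists_isMaxOn_lagrangianPoly [Nonempty γ] (G : Finset (Finset γ)) :
    ∃ p ∈ stdSimplex ℝ γ, IsMaxOn (lagrangianPoly G) (stdSimplex ℝ γ) p := by
  classical
  exact (isCompact_stdSimplex ℝ γ).exists_isMaxOn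
    ⟨_, single_mem_stdSimplex ℝ (Classical.arbitrary γ)⟩
    (continuous_finsetSum _ fun _ _ => continuous_finsetProd _ fun v _ =>
      continuous_apply v).continuousOn

end Lagrangian

section Support

variable {γ : Type*} [DecidableEq γ] {G : Finset (Finset γ)} {p : γ → ℝ} {u v : γ}

def shiftWeight (p : γ → ℝ) (u v : γ) (t : ℝ) : γ → ℝ := p + t • (Pi.single u 1 - Pi.single v 1)

lemma shiftWeight_apply_left (huv : u ≠ v) (t : ℝ) : shiftWeight p u v t u = p u + t := by
  simp [shiftWeight, huv]

lemma shiftWeight_apply_right (huv : u ≠ v) (t : ℝ) : shiftWeight p u v t v = p v - t := by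
  simp [shiftWeight, huv.symm, sub_eq_add_neg]

lemma shiftWeight_apply_of_ne {w : γ} (hwu : w ≠ u) (hwv : w ≠ v) (t : ℝ) :
    shiftWeight p u v t w = p w := by
  simp [shiftWeight, hwu, hwv]

lemma shiftWeight_mem_stdSimplex [Fintype γ] (hp : p ∈ stdSimplex ℝ γ) (huv : u ≠ v) {t : ℝ}
    (hu : 0 ≤ p u + t) (hv : 0 ≤ p v - t) : shiftWeight p u v t ∈ stdSimplex ℝ γ := by
  refine ⟨fun w => ?_, ?_⟩
  · by_cases hwu : w = u
    · rwa [hwu, shiftWeight_apply_left huv]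
    by_cases hwv : w = v
    · rwa [hwv, shiftWeight_apply_right huv]
    rw [shiftWeight_apply_of_ne hwu hwv]
    exact hp.1 w
  · simp [shiftWeight, sum_add_distrib, ← mul_sum, hp.2]

lemma exists_prod_shiftWeight_eq (huv : u ≠ v) {e : Finset γ}
    (hz : u ∈ e → v ∈ e → ∃ w ∈ e, w ≠ u ∧ w ≠ v ∧ p w = 0) :
    ∃ c : ℝ, ∀ t, ∏ w ∈ e, shiftWeight p u v t w = ∏ w ∈ e, p w + t * c := by
  have hrest : ∀ t, ∀ w ∈ (e.erase u).erase v, shiftWeight p u v t w = p w := fun t w hw => by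
    simp only [mem_erase] at hw
    exact shiftWeight_apply_of_ne hw.2.1 hw.1 t
  by_cases hu : u ∈ e <;> by_cases hv : v ∈ e
  · obtain ⟨w, hw, hwu, hwv, hw0⟩ := hz hu hv
    refine ⟨0, fun t => ?_⟩
    rw [prod_eq_zero hw (by rwa [shiftWeight_apply_of_ne hwu hwv]), prod_eq_zero hw hw0]
    ring
  · refine ⟨∏ w ∈ e.erase u, p w, fun t => ?_⟩
    rw [← mul_prod_erase _ _ hu, ← mul_prod_erase _ _ hu, shiftWeight_apply_left huv,
      ← erase_eq_of_notMem (mt mem_of_mem_erase hv), prod_congr rfl (hrest t)]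
    ring
  · refine ⟨-∏ w ∈ e.erase v, p w, fun t => ?_⟩
    rw [← mul_prod_erase _ _ hv, ← mul_prod_erase _ _ hv, shiftWeight_apply_right huv,
      ← erase_eq_of_notMem (mt mem_of_mem_erase hu), erase_right_comm,
      prod_congr rfl (hrest t)]
    ring
  · refine ⟨0, fun t => ?_⟩
    rw [← erase_eq_of_notMem hu, ← erase_eq_of_notMem (mt mem_of_mem_erase hv),
      prod_congr rfl (hrest t)]
    ring

lemma exists_lagrangianPoly_shiftWeight_eq (huv : u ≠ v)
    (hz : ∀ e ∈ G, u ∈ e → v ∈ e → ∃ w ∈ e, w ≠ u ∧ w ≠ v ∧ p w = 0) :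
    ∃ B : ℝ, ∀ t, lagrangianPoly G (shiftWeight p u v t) = lagrangianPoly G p + t * B := by
  choose! c hc using fun e he => exists_prod_shiftWeight_eq (p := p) huv (hz e he)
  refine ⟨∑ e ∈ G, c e, fun t => ?_⟩
  simp only [lagrangianPoly, mul_sum, ← sum_add_distrib]
  exact sum_congr rfl fun e he => hc e he t

lemma card_support_shiftWeight_lt [Fintype γ] (huv : u ≠ v) (hu : p u ≠ 0) (hv : p v ≠ 0) :
    #{w | shiftWeight p u v (p v) w ≠ 0} < #{w | p w ≠ 0} := by
  refine card_lt_card (ssubset_iff_of_subset (fun w => ?_) |>.2 ⟨v, ?_, ?_⟩)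
  · simp only [mem_filter, mem_univ, true_and]
    by_cases hwu : w = u
    · exact fun _ => hwu ▸ hu
    by_cases hwv : w = v
    · simp [hwv, shiftWeight_apply_right huv]
    rw [shiftWeight_apply_of_ne hwu hwv]
    exact id
  · simpa using hv
  · simp [shiftWeight_apply_right huv]

/-- Take a maximiser of minimal support. If two of its support vertices lay in no edge of
positive weight, moving weight between them would change the value affinely, so all of it could
be moved onto one of them without loss, shrinking the support. -/
theorem exists_isMaxOn_lagrangianPoly_forall_pair_covered [Fintype γ] [Nonempty γ]
    (G : Finset (Finset γ)) :
    ∃ p ∈ stdSimplex ℝ γ, IsMaxOn (lagrangianPoly G) (stdSimplex ℝ γ) p ∧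
      ∀ u v, u ≠ v → p u ≠ 0 → p v ≠ 0 → ∃ e ∈ G, u ∈ e ∧ v ∈ e ∧ ∀ w ∈ e, p w ≠ 0 := by
  obtain ⟨p, ⟨hp, hmax⟩, hmin⟩ := (measure fun q : γ → ℝ => #{w | q w ≠ 0}).wf.has_min
    {p | p ∈ stdSimplex ℝ γ ∧ IsMaxOn (lagrangianPoly G) (stdSimplex ℝ γ) p}
    (exists_isMaxOn_lagrangianPoly G)
  refine ⟨p, hp, hmax, fun u v huv hu hv => ?_⟩
  by_contra! hcon
  obtain ⟨B, hB⟩ := exists_lagrangianPoly_shiftWeight_eq huv fun e he hue hve => by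
    obtain ⟨w, hw, hw0⟩ := hcon e he hue hve
    exact ⟨w, hw, fun h => hu (h ▸ hw0), fun h => hv (h ▸ hw0), hw0⟩
  have hpu : 0 < p u := (hp.1 u).lt_of_ne' hu
  have hpv : 0 < p v := (hp.1 v).lt_of_ne' hv
  have hq := shiftWeight_mem_stdSimplex hp huv (t := p v) (by linarith) (by linarith)
  have hleft := hmax (shiftWeight_mem_stdSimplex hp huv (t := -p u) (by linarith) (by linarith))
  have hright := hmax hq
  simp only [Set.mem_ofPred_eq, hB] at hleft hright
  have hB0 : B = 0 := by nlinarith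
  refine hmin _ ⟨hq, fun q hq' => ?_⟩ (card_support_shiftWeight_lt huv hu hv)
  simpa [hB, hB0] using hmax hq'

end Support

def intersectingLagrangians (r : ℕ) : Set ℝ :=
  {x : ℝ | ∃ (k : ℕ) (H : Finset (Finset (Fin k))),
    (∀ e ∈ H, e.card = r) ∧ (∀ e ∈ H, ∀ f ∈ H, (e ∩ f).Nonempty) ∧ x = lagrangian H}

lemma zero_mem_intersectingLagrangians (r : ℕ) : (0 : ℝ) ∈ intersectingLagrangians r :=
  ⟨0, ∅, by simp, by simp, (lagrangian_of_isEmpty _).symm⟩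

lemma bddAbove_intersectingLagrangians (r : ℕ) : BddAbove (intersectingLagrangians r) :=
  ⟨Real.exp 1, by rintro x ⟨k, H, -, -, rfl⟩; exact lagrangian_le_exp_one H⟩

theorem lagrangian_le_sSup_intersectingLagrangians {n r : ℕ} (K : Finset (Finset (Fin n)))
    (hK : ∀ e ∈ K, e.card = r)
    (hcross : ∀ e ∈ K, ∀ f ∈ K, Disjoint e f → ∃ u ∈ e, ∃ v ∈ f, ∀ g ∈ K, ¬(u ∈ g ∧ v ∈ g)) :
    lagrangian K ≤ sSup (intersectingLagrangians r) := by
  cases isEmpty_or_nonempty (Fin n)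
  · rw [lagrangian_of_isEmpty]
    exact le_csSup (bddAbove_intersectingLagrangians r) (zero_mem_intersectingLagrangians r)
  obtain ⟨p, hp, hmax, hcov⟩ := exists_isMaxOn_lagrangianPoly_forall_pair_covered K
  set H := K.filter fun e => ∀ w ∈ e, p w ≠ 0
  have hint : ∀ e ∈ H, ∀ f ∈ H, (e ∩ f).Nonempty := by
    intro e he f hf
    by_contra hef
    rw [not_nonempty_iff_eq_empty, ← disjoint_iff_inter_eq_empty] at hef
    simp only [H, mem_filter] at he hf
    obtain ⟨u, hu, v, hv, hunc⟩ := hcross e he.1 f hf.1 hef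
    obtain ⟨g, hg, hug, hvg, -⟩ :=
      hcov u v (fun h => disjoint_left.1 hef hu (h ▸ hv)) (he.2 u hu) (hf.2 v hv)
    exact hunc g hg ⟨hug, hvg⟩
  have hval : lagrangianPoly H p = lagrangianPoly K p :=
    sum_filter_of_ne fun e _ he => prod_ne_zero_iff.1 he
  calc lagrangian K = lagrangianPoly H p := by rw [hval, hmax.lagrangian_eq hp]
    _ ≤ lagrangian H := lagrangianPoly_le_lagrangian hp
    _ ≤ sSup (intersectingLagrangians r) :=
      le_csSup (bddAbove_intersectingLagrangians r)
        ⟨n, H, fun e he => hK e (mem_filter.1 he).1, hint, rfl⟩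

section Embedding

variable {α : Type*} {r t : ℕ}

lemma krr_left_mem : univ.image (fun i => (Sum.inl (0, i) : KrrV r)) ∈ Krr r := by
  simp [Krr]

lemma krr_right_mem : univ.image (fun i => (Sum.inl (1, i) : KrrV r)) ∈ Krr r := by
  simp [Krr]

lemma krr_cross_mem (i j : Fin r) :
    insert (Sum.inl (0, i)) (insert (Sum.inl (1, j)) (univ.image fun k => Sum.inr ((i, j), k))) ∈
      Krr r := by
  simp [Krr]

def krrMap (a b : Fin r → α) (c : Fin r × Fin r → Fin (r - 2) → α) : KrrV r → α :=
  Sum.elim (fun si => ![a, b] si.1 si.2) fun x => c x.1 x.2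

lemma krrMap_injective {a b : Fin r → α} {c : Fin r × Fin r → Fin (r - 2) → α}
    (ha : Function.Injective a) (hb : Function.Injective b) (hab : ∀ i j, a i ≠ b j)
    (hc : ∀ x, Function.Injective (c x)) (hca : ∀ x k i, c x k ≠ a i) (hcb : ∀ x k j, c x k ≠ b j)
    (hcc : ∀ x y k l, x ≠ y → c x k ≠ c y l) : Function.Injective (krrMap a b c) := by
  refine Function.Injective.sumElim ?_ ?_ ?_
  · rintro ⟨s, i⟩ ⟨s', j⟩ h
    fin_cases s <;> fin_cases s' <;> simp at h
    · rw [ha h]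
    · exact absurd h (hab i j)
    · exact absurd h.symm (hab j i)
    · rw [hb h]
  · rintro ⟨x, k⟩ ⟨y, l⟩ h
    by_cases hxy : x = y
    · subst hxy
      simp only [Prod.mk.injEq, true_and]
      exact hc x h
    · exact absurd h (hcc x y k l hxy)
  · rintro ⟨s, i⟩ ⟨x, k⟩
    fin_cases s
    · exact (hca x k i).symm
    · exact (hcb x k i).symm

variable [DecidableEq α] {G : Finset (Finset α)}

def IsRobustPair (G : Finset (Finset α)) (t : ℕ) (u v : α) : Prop :=
  ∀ W : Finset α, W.card ≤ t → ∃ e ∈ G, u ∈ e ∧ v ∈ e ∧ Disjoint (e \ {u, v}) W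

lemma card_sdiff_pair (hG : ∀ e ∈ G, e.card = r) {e : Finset α} (he : e ∈ G) {u v : α}
    (hu : u ∈ e) (hv : v ∈ e) (huv : u ≠ v) : (e \ {u, v}).card = r - 2 := by
  rw [card_sdiff_of_subset (insert_subset hu (singleton_subset_iff.2 hv)), hG e he,
    card_pair huv]

theorem exists_edges_pairwiseDisjoint_of_isRobustPair (hG : ∀ e ∈ G, e.card = r) {ι : Type*}
    [DecidableEq ι] (u v : ι → α) (huv : ∀ q, u q ≠ v q) (A : Finset α) (Q : Finset ι)
    (hrob : ∀ q ∈ Q, IsRobustPair G t (u q) (v q)) (ht : A.card + Q.card * (r - 2) ≤ t) :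
    ∃ g : ι → Finset α, (∀ q ∈ Q, g q ∈ G ∧ u q ∈ g q ∧ v q ∈ g q ∧
        Disjoint (g q \ {u q, v q}) A) ∧
      (Q : Set ι).PairwiseDisjoint fun q => g q \ {u q, v q} := by
  induction Q using Finset.induction_on with
  | empty => exact ⟨fun _ => ∅, by simp, by simp⟩
  | @insert q Q hqQ ih =>
    rw [card_insert_of_notMem hqQ] at ht
    have ht' : A.card + Q.card * (r - 2) ≤ t :=
      (Nat.add_le_add_left (Nat.mul_le_mul_right _ (Nat.le_succ _)) _).trans ht
    obtain ⟨g, hg, hdisj⟩ := ih (fun q' hq' => hrob q' (mem_insert_of_mem hq')) ht'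
    set W := A ∪ Q.biUnion fun q' => g q' \ {u q', v q'}
    have hW : W.card ≤ t :=
      (card_union_le _ _).trans <| le_trans (Nat.add_le_add_left (card_biUnion_le_card_mul _ _ _
        fun q' hq' => (card_sdiff_pair hG (hg q' hq').1 (hg q' hq').2.1 (hg q' hq').2.2.1
          (huv q')).le) _) ht'
    obtain ⟨e, he, hue, hve, heW⟩ := hrob q (mem_insert_self q Q) W hW
    have hupd : ∀ q' ∈ Q, Function.update g q e q' = g q' := fun q' hq' =>
      Function.update_of_ne (ne_of_mem_of_not_mem hq' hqQ) _ _
    refine ⟨Function.update g q e, fun q' hq' => ?_, ?_⟩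
    · rcases mem_insert.1 hq' with rfl | hq'
      · rw [Function.update_self]
        exact ⟨he, hue, hve, heW.mono_right subset_union_left⟩
      · rw [hupd q' hq']
        exact hg q' hq'
    · have hdisj' : (Q : Set ι).PairwiseDisjoint
          fun q' => Function.update g q e q' \ {u q', v q'} :=
        hdisj.mono_on fun q' hq' => by rw [hupd q' hq']
      rw [coe_insert]
      refine hdisj'.insert fun q' hq' _ => ?_
      simp only [Function.update_self, hupd q' hq']
      exact heW.mono_right ((subset_biUnion_of_mem (fun q' => g q' \ {u q', v q'}) hq').trans
        subset_union_right)

lemma not_free_krr_of_injective_krrMap {a b : Fin r → α} {c : Fin r × Fin r → Fin (r - 2) → α}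
    (hinj : Function.Injective (krrMap a b c)) (h₁ : univ.image a ∈ G) (h₂ : univ.image b ∈ G)
    (hg : ∀ i j, insert (a i) (insert (b j) (univ.image (c (i, j)))) ∈ G) :
    ¬ Free (Krr r) G := by
  refine fun hfree => hfree ⟨krrMap a b c, hinj, fun e he => ?_⟩
  simp only [Krr, mem_union, mem_insert, mem_singleton, mem_image, mem_univ, true_and] at he
  rcases he with (rfl | rfl) | ⟨⟨i, j⟩, rfl⟩
  · simpa [image_image, Function.comp_def, krrMap] using h₁
  · simpa [image_image, Function.comp_def, krrMap] using h₂
  · simpa [image_insert, image_image, Function.comp_def, krrMap] using hg i j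

lemma insert_insert_sdiff_pair {e : Finset α} {u v : α} (hu : u ∈ e) (hv : v ∈ e) :
    insert u (insert v (e \ {u, v})) = e := by
  ext x
  by_cases hxu : x = u <;> by_cases hxv : x = v <;> simp_all

/-- The `r²` cross edges are chosen one at a time; the vertices to avoid at each step lie in the
partial copy of `K_{r,r}^{(r)}` built so far. -/
theorem not_free_krr_of_isRobustPair (hG : ∀ e ∈ G, e.card = r) {e₁ e₂ : Finset α}
    (h₁ : e₁ ∈ G) (h₂ : e₂ ∈ G) (hd : Disjoint e₁ e₂)
    (hrob : ∀ u ∈ e₁, ∀ v ∈ e₂, IsRobustPair G (Fintype.card (KrrV r)) u v) :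
    ¬ Free (Krr r) G := by
  obtain ⟨a, ha⟩ := Function.Embedding.exists_of_card_eq_finset
    (by rw [Fintype.card_fin, hG _ h₁] : Fintype.card (Fin r) = e₁.card)
  obtain ⟨b, hb⟩ := Function.Embedding.exists_of_card_eq_finset
    (by rw [Fintype.card_fin, hG _ h₂] : Fintype.card (Fin r) = e₂.card)
  have ha' : ∀ i, a i ∈ e₁ := fun i => ha ▸ mem_map_of_mem a (mem_univ i)
  have hb' : ∀ j, b j ∈ e₂ := fun j => hb ▸ mem_map_of_mem b (mem_univ j)
  have hab : ∀ i j, a i ≠ b j := fun i j h => disjoint_left.1 hd (ha' i) (h ▸ hb' j)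
  obtain ⟨g, hg, hdisj⟩ := exists_edges_pairwiseDisjoint_of_isRobustPair hG
    (fun x : Fin r × Fin r => a x.1) (fun x => b x.2) (fun x => hab x.1 x.2) (e₁ ∪ e₂) univ
    (fun x _ => hrob _ (ha' x.1) _ (hb' x.2))
    (by rw [card_union_of_disjoint hd, hG _ h₁, hG _ h₂]; simp [KrrV]; ring_nf; rfl)
  choose c hc using fun x => Function.Embedding.exists_of_card_eq_finset
    (by rw [Fintype.card_fin, card_sdiff_pair hG (hg x (mem_univ x)).1 (hg x (mem_univ x)).2.1
      (hg x (mem_univ x)).2.2.1 (hab x.1 x.2)] :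
      Fintype.card (Fin (r - 2)) = (g x \ {a x.1, b x.2}).card)
  have hc' : ∀ x k, c x k ∈ g x \ {a x.1, b x.2} := fun x k => hc x ▸ mem_map_of_mem _ (mem_univ k)
  have hce : ∀ x k, c x k ∉ e₁ ∪ e₂ := fun x k =>
    disjoint_left.1 (hg x (mem_univ x)).2.2.2 (hc' x k)
  refine not_free_krr_of_injective_krrMap (c := fun x => c x)
    (krrMap_injective a.injective b.injective hab (fun x => (c x).injective)
      (fun x k i h => hce x k (mem_union_left _ (h ▸ ha' i)))
      (fun x k j h => hce x k (mem_union_right _ (h ▸ hb' j)))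
      (fun x y k l hxy h => disjoint_left.1 (hdisj (mem_coe.2 (mem_univ x))
        (mem_coe.2 (mem_univ y)) hxy) (hc' x k) (h ▸ hc' y l)))
    (by rwa [← map_eq_image, ha]) (by rwa [← map_eq_image, hb]) fun i j => ?_
  obtain ⟨hgG, hgi, hgj, -⟩ := hg (i, j) (mem_univ _)
  rw [← map_eq_image, hc]
  exact (insert_insert_sdiff_pair hgi hgj).symm ▸ hgG

end Embedding

section Cleaning

variable {α : Type*} [Fintype α] [DecidableEq α] {G : Finset (Finset α)} {r t : ℕ}

open Classical in
noncomputable def robustSubgraph (G : Finset (Finset α)) (t : ℕ) : Finset (Finset α) :=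
  G.filter fun e => ∀ u ∈ e, ∀ v ∈ e, u ≠ v → IsRobustPair G t u v

lemma mem_robustSubgraph {e : Finset α} :
    e ∈ robustSubgraph G t ↔ e ∈ G ∧ ∀ u ∈ e, ∀ v ∈ e, u ≠ v → IsRobustPair G t u v := by
  classical
  simp [robustSubgraph]

lemma robustSubgraph_subset : robustSubgraph G t ⊆ G := fun _ he => (mem_robustSubgraph.1 he).1

theorem exists_uncovered_pair_robustSubgraph (hG : ∀ e ∈ G, e.card = r) (hfree : Free (Krr r) G) :
    ∀ e ∈ robustSubgraph G (Fintype.card (KrrV r)), ∀ f ∈ robustSubgraph G (Fintype.card (KrrV r)),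
      Disjoint e f → ∃ u ∈ e, ∃ v ∈ f,
        ∀ g ∈ robustSubgraph G (Fintype.card (KrrV r)), ¬(u ∈ g ∧ v ∈ g) := by
  intro e he f hf hd
  by_contra! hcov
  refine not_free_krr_of_isRobustPair hG (robustSubgraph_subset he) (robustSubgraph_subset hf) hd
    (fun u hu v hv => ?_) hfree
  obtain ⟨g, hg, hug, hvg⟩ := hcov u hu v hv
  exact (mem_robustSubgraph.1 hg).2 u hug v hvg fun h => disjoint_left.1 hd hu (h ▸ hv)

lemma card_filter_superset_le (hG : ∀ e ∈ G, e.card = r) (s : Finset α) :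
    #{e ∈ G | s ⊆ e} ≤ (Fintype.card α).choose (r - s.card) := by
  rw [← card_univ, ← card_powersetCard]
  refine card_le_card_of_injOn (· \ s) (fun e he => ?_) fun e he e' he' hee' => ?_
  · obtain ⟨heG, hse⟩ := mem_filter.1 he
    exact mem_powersetCard.2 ⟨subset_univ _, by rw [card_sdiff_of_subset hse, hG e heG]⟩
  · rw [← sdiff_union_of_subset (mem_filter.1 he).2, ← sdiff_union_of_subset (mem_filter.1 he').2]
    exact congrArg (· ∪ s) hee'

/-- An edge through a non-robust pair `u, v` meets the witness set `W` in a third vertex. -/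
lemma card_filter_mem_mem_le_of_not_isRobustPair (hG : ∀ e ∈ G, e.card = r) {u v : α}
    (huv : u ≠ v) (h : ¬ IsRobustPair G t u v) :
    #{e ∈ G | u ∈ e ∧ v ∈ e} ≤ t * (Fintype.card α).choose (r - 3) := by
  simp only [IsRobustPair, not_forall, not_exists, not_and] at h
  obtain ⟨W, hW, hWe⟩ := h
  calc #{e ∈ G | u ∈ e ∧ v ∈ e}
      ≤ #((W \ {u, v}).biUnion fun x => {e ∈ G | {u, v, x} ⊆ e}) := by
        refine card_le_card fun e he => ?_
        obtain ⟨heG, hu, hv⟩ := mem_filter.1 he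
        obtain ⟨x, hxe, hxW⟩ := not_disjoint_iff.1 (hWe e heG hu hv)
        exact mem_biUnion.2 ⟨x, mem_sdiff.2 ⟨hxW, (mem_sdiff.1 hxe).2⟩, mem_filter.2 ⟨heG,
          insert_subset hu (insert_subset hv (singleton_subset_iff.2 (mem_sdiff.1 hxe).1))⟩⟩
    _ ≤ #(W \ {u, v}) * (Fintype.card α).choose (r - 3) := by
        refine card_biUnion_le_card_mul _ _ _ fun x hx => ?_
        have hx : x ≠ u ∧ x ≠ v := by simpa [not_or] using (mem_sdiff.1 hx).2
        have h3 : #{u, v, x} = 3 := card_eq_three.2 ⟨u, v, x, huv, hx.1.symm, hx.2.symm, rfl⟩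
        simpa only [h3] using card_filter_superset_le hG {u, v, x}
    _ ≤ t * (Fintype.card α).choose (r - 3) :=
        Nat.mul_le_mul_right _ ((card_le_card sdiff_subset).trans hW)

theorem card_sdiff_robustSubgraph_le (hG : ∀ e ∈ G, e.card = r) :
    #(G \ robustSubgraph G t) ≤ Fintype.card α ^ 2 * (t * (Fintype.card α).choose (r - 3)) := by
  classical
  set P := (univ : Finset α).offDiag.filter fun x => ¬ IsRobustPair G t x.1 x.2
  calc #(G \ robustSubgraph G t) ≤ #(P.biUnion fun x => {e ∈ G | x.1 ∈ e ∧ x.2 ∈ e}) := by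
        refine card_le_card fun e he => ?_
        obtain ⟨heG, heR⟩ := mem_sdiff.1 he
        simp only [mem_robustSubgraph, heG, true_and, not_forall] at heR
        obtain ⟨u, hu, v, hv, huv, hnot⟩ := heR
        exact mem_biUnion.2 ⟨(u, v), mem_filter.2 ⟨mem_offDiag.2 ⟨mem_univ _, mem_univ _, huv⟩,
          hnot⟩, mem_filter.2 ⟨heG, hu, hv⟩⟩
    _ ≤ #P * (t * (Fintype.card α).choose (r - 3)) :=
        card_biUnion_le_card_mul _ _ _ fun x hx => card_filter_mem_mem_le_of_not_isRobustPair hG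
          (mem_offDiag.1 (mem_filter.1 hx).1).2.2 (mem_filter.1 hx).2
    _ ≤ Fintype.card α ^ 2 * (t * (Fintype.card α).choose (r - 3)) := by
        refine Nat.mul_le_mul_right _ ((card_filter_le _ _).trans ?_)
        rw [offDiag_card, card_univ, sq]
        exact Nat.sub_le _ _

end Cleaning

section TuranNumber

variable {γ : Type*} [DecidableEq γ] {F : Finset (Finset γ)} {r n : ℕ}

lemma free_empty {α : Type*} [DecidableEq α] (hF : F.Nonempty) :
    Free F (∅ : Finset (Finset α)) := by
  rintro ⟨φ, -, hφ⟩
  exact notMem_empty _ (hφ _ hF.choose_spec)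

lemma bddAbove_exNum_set (r n : ℕ) (F : Finset (Finset γ)) :
    BddAbove {m | ∃ G : Finset (Finset (Fin n)), (∀ e ∈ G, e.card = r) ∧ Free F G ∧ G.card = m} :=
  ⟨n.choose r, by
    rintro _ ⟨G, hG, -, rfl⟩
    simpa using card_le_card fun e he => mem_powersetCard.2 ⟨subset_univ e, hG e he⟩⟩

lemma exists_card_eq_exNum (hF : F.Nonempty) :
    ∃ G : Finset (Finset (Fin n)), (∀ e ∈ G, e.card = r) ∧ Free F G ∧ G.card = exNum r n F :=
  Nat.sSup_mem (s := {m | ∃ G : Finset (Finset (Fin n)), (∀ e ∈ G, e.card = r) ∧ Free F G ∧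
    G.card = m}) ⟨0, ∅, by simp, free_empty hF, rfl⟩ (bddAbove_exNum_set r n F)

lemma card_le_exNum {G : Finset (Finset (Fin n))} (hG : ∀ e ∈ G, e.card = r) (hfree : Free F G) :
    G.card ≤ exNum r n F :=
  le_csSup (bddAbove_exNum_set r n F) ⟨G, hG, hfree, rfl⟩

lemma krr_nonempty (r : ℕ) : (Krr r).Nonempty := ⟨_, krr_left_mem⟩

end TuranNumber

lemma card_le_lagrangian_mul_pow {γ : Type*} [Fintype γ] [Nonempty γ] {K : Finset (Finset γ)}
    {r : ℕ} (hK : ∀ e ∈ K, e.card = r) :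
    (K.card : ℝ) ≤ lagrangian K * (Fintype.card γ : ℝ) ^ r := by
  have hN : (0 : ℝ) < Fintype.card γ := Nat.cast_pos.2 Fintype.card_pos
  have hp : (fun _ => (Fintype.card γ : ℝ)⁻¹) ∈ stdSimplex ℝ γ :=
    ⟨fun _ => inv_nonneg.2 hN.le, by simp [hN.ne']⟩
  have hval : lagrangianPoly K (fun _ => (Fintype.card γ : ℝ)⁻¹) =
      K.card * ((Fintype.card γ : ℝ)⁻¹) ^ r := by
    simp only [lagrangianPoly, prod_const]
    rw [sum_congr rfl fun e he => by rw [hK e he], sum_const, nsmul_eq_mul]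
  calc (K.card : ℝ) = lagrangianPoly K (fun _ => (Fintype.card γ : ℝ)⁻¹) * Fintype.card γ ^ r := by
        rw [hval, mul_assoc, ← mul_pow, inv_mul_cancel₀ hN.ne', one_pow, mul_one]
    _ ≤ lagrangian K * Fintype.card γ ^ r := by
        gcongr
        exact lagrangianPoly_le_lagrangian hp

theorem exNum_krr_le {r n : ℕ} (hr : 3 ≤ r) (hn : 0 < n) :
    (exNum r n (Krr r) : ℝ) ≤
      sSup (intersectingLagrangians r) * n ^ r + Fintype.card (KrrV r) * n ^ (r - 1) := by
  obtain ⟨G, hG, hfree, hcard⟩ := exists_card_eq_exNum (n := n) (r := r) (krr_nonempty r)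
  have : Nonempty (Fin n) := Fin.pos_iff_nonempty.1 hn
  set R := robustSubgraph G (Fintype.card (KrrV r))
  have hRG : ∀ e ∈ R, e.card = r := fun e he => hG e (robustSubgraph_subset he)
  have hR : (R.card : ℝ) ≤ sSup (intersectingLagrangians r) * n ^ r :=
    calc (R.card : ℝ) ≤ lagrangian R * n ^ r := by simpa using card_le_lagrangian_mul_pow hRG
      _ ≤ sSup (intersectingLagrangians r) * n ^ r := by
        gcongr
        exact lagrangian_le_sSup_intersectingLagrangians R hRG
          (exists_uncovered_pair_robustSubgraph hG hfree)
  have hrest : ((G \ R).card : ℝ) ≤ Fintype.card (KrrV r) * n ^ (r - 1) := by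
    have h := card_sdiff_robustSubgraph_le (t := Fintype.card (KrrV r)) hG
    rw [Fintype.card_fin] at h
    replace h := h.trans (Nat.mul_le_mul_left _ (Nat.mul_le_mul_left _ (Nat.choose_le_pow n _)))
    calc ((G \ R).card : ℝ) ≤ n ^ 2 * (Fintype.card (KrrV r) * n ^ (r - 3)) := by exact_mod_cast h
      _ = Fintype.card (KrrV r) * n ^ (r - 1) := by
        rw [show r - 1 = 2 + (r - 3) by omega, pow_add]
        ring
  rw [← hcard, ← card_sdiff_add_card_eq_card robustSubgraph_subset, Nat.cast_add]
  linarith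

section BlowUp

variable {β γ : Type*} [Fintype β] [DecidableEq γ]

def blowUp (H : Finset (Finset γ)) (c : β → γ) : Finset (Finset β) :=
  {e | e.image c ∈ H ∧ e.card = (e.image c).card}

variable {H : Finset (Finset γ)} {r : ℕ}

lemma card_eq_of_mem_blowUp (hH : ∀ f ∈ H, f.card = r) {c : β → γ} {e : Finset β}
    (he : e ∈ blowUp H c) : e.card = r := by
  obtain ⟨hH', hcard⟩ := (mem_filter.1 he).2
  rw [hcard, hH _ hH']

variable [DecidableEq β]

theorem free_krr_blowUp (hint : ∀ e ∈ H, ∀ f ∈ H, (e ∩ f).Nonempty) (c : β → γ) :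
    Free (Krr r) (blowUp H c) := by
  rintro ⟨φ, hφ, hmap⟩
  have hE : ∀ e ∈ Krr r, ((e.image φ).image c) ∈ H ∧
      (e.image φ).card = ((e.image φ).image c).card := fun e he => (mem_filter.1 (hmap e he)).2
  obtain ⟨w, hw⟩ := hint _ (hE _ krr_left_mem).1 _ (hE _ krr_right_mem).1
  simp only [image_image, mem_inter, mem_image, mem_univ, true_and, Function.comp_apply] at hw
  obtain ⟨⟨i, hi⟩, ⟨j, hj⟩⟩ := hw
  have hinj := card_image_iff.1 (hE _ (krr_cross_mem i j)).2.symm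
  have := hφ (hinj (mem_image_of_mem φ (mem_insert_self _ _))
    (mem_image_of_mem φ (mem_insert_of_mem (mem_insert_self _ _))) (hi.trans hj.symm))
  simp at this

lemma prod_card_fiber_le_card_transversals (c : β → γ) (f : Finset γ) :
    ∏ i ∈ f, #{v | c v = i} ≤ #{e : Finset β | e.image c = f ∧ e.card = f.card} := by
  rw [← card_pi]
  have hc : ∀ g ∈ f.pi fun i => ({v | c v = i} : Finset β), ∀ i (hi : i ∈ f), c (g i hi) = i :=
    fun g hg i hi => (mem_filter.1 (mem_pi.1 hg i hi)).2
  refine card_le_card_of_injOn (fun g => f.attach.image fun i => g i.1 i.2) (fun g hg => ?_) ?_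
  · have himage : (f.attach.image fun i => g i.1 i.2).image c = f := by
      rw [image_image]
      convert attach_image_val (s := f) using 2
      exact funext fun i => hc g hg i.1 i.2
    refine mem_filter.2 ⟨mem_univ _, himage, le_antisymm (card_image_le.trans card_attach.le) ?_⟩
    conv_lhs => rw [← himage]
    exact card_image_le
  · intro g hg g' hg' h
    funext i hi
    have hmem : g i hi ∈ f.attach.image fun i => g' i.1 i.2 := by
      simp only at h
      exact h ▸ mem_image_of_mem (fun i => g i.1 i.2) (mem_attach f ⟨i, hi⟩)
    obtain ⟨⟨j, hj⟩, -, hgj⟩ := mem_image.1 hmem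
    obtain rfl : j = i := (hc g' hg' j hj).symm.trans ((congrArg c hgj).trans (hc g hg i hi))
    exact hgj.symm

lemma sum_prod_card_fiber_le_card_blowUp (c : β → γ) :
    ∑ f ∈ H, ∏ i ∈ f, #{v | c v = i} ≤ #(blowUp H c) := by
  rw [card_eq_sum_card_fiberwise (f := fun e => e.image c) fun e he => (mem_filter.1 he).2.1]
  refine sum_le_sum fun f hf => (prod_card_fiber_le_card_transversals c f).trans
    (card_le_card fun e he => ?_)
  obtain ⟨hef, hcard⟩ := (mem_filter.1 he).2
  exact mem_filter.2 ⟨mem_filter.2 ⟨mem_univ _, hef ▸ hf, hef ▸ hcard⟩, hef⟩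

end BlowUp

theorem sum_prod_le_exNum_krr {k n r : ℕ} {H : Finset (Finset (Fin k))} (hH : ∀ f ∈ H, f.card = r)
    (hint : ∀ e ∈ H, ∀ f ∈ H, (e ∩ f).Nonempty) {m : Fin k → ℕ} (hm : ∑ i, m i ≤ n) :
    ∑ f ∈ H, ∏ i ∈ f, m i ≤ exNum r n (Krr r) := by
  cases isEmpty_or_nonempty (Fin k)
  · rw [sum_eq_zero fun f hf => absurd (hint f hf f hf) (by simp [eq_empty_of_isEmpty f])]
    exact Nat.zero_le _
  obtain ⟨ψ⟩ := Function.Embedding.nonempty_of_card_le (α := Σ i, Fin (m i)) (β := Fin n)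
    (by simpa using hm)
  set c : Fin n → Fin k := Function.extend ψ Sigma.fst fun _ => Classical.arbitrary _
  have hfiber : ∀ i, m i ≤ #{v | c v = i} := fun i => by
    simpa using card_le_card_of_injOn (s := univ) (fun t : Fin (m i) => ψ ⟨i, t⟩)
      (fun t _ => by simp [c, ψ.injective.extend_apply])
      fun t _ t' _ h => by simpa using ψ.injective h
  calc ∑ f ∈ H, ∏ i ∈ f, m i ≤ ∑ f ∈ H, ∏ i ∈ f, #{v | c v = i} :=
        sum_le_sum fun f _ => prod_le_prod' fun i _ => hfiber i
    _ ≤ #(blowUp H c) := sum_prod_card_fiber_le_card_blowUp c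
    _ ≤ exNum r n (Krr r) :=
        card_le_exNum (fun e he => card_eq_of_mem_blowUp hH he) (free_krr_blowUp hint c)

lemma prod_sub_prod_le_card_mul_pow {ι : Type*} [DecidableEq ι] (s : Finset ι) {x y : ι → ℝ}
    {N : ℝ} (hy : ∀ i ∈ s, 0 ≤ y i) (hyx : ∀ i ∈ s, y i ≤ x i) (hxy : ∀ i ∈ s, x i ≤ y i + 1)
    (hxN : ∀ i ∈ s, x i ≤ N) :
    ∏ i ∈ s, x i - ∏ i ∈ s, y i ≤ #s * N ^ (#s - 1) := by
  induction s using Finset.induction_on with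
  | empty => simp
  | @insert a s has ih =>
    simp only [mem_insert, forall_eq_or_imp] at hy hyx hxy hxN
    have hX0 : 0 ≤ ∏ i ∈ s, x i := prod_nonneg fun i hi => (hy.2 i hi).trans (hyx.2 i hi)
    have hXN : ∏ i ∈ s, x i ≤ N ^ #s :=
      (prod_le_prod (fun i hi => (hy.2 i hi).trans (hyx.2 i hi)) hxN.2).trans_eq (prod_const N)
    have hN : 0 ≤ N := hy.1.trans (hyx.1.trans hxN.1)
    have hNpow : N * (#s * N ^ (#s - 1)) = #s * N ^ #s := by
      rcases Nat.eq_zero_or_pos #s with hs | hs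
      · simp [hs]
      · rw [mul_left_comm, mul_pow_sub_one hs.ne']
    have hdiff := ih hy.2 hyx.2 hxy.2 hxN.2
    rw [prod_insert has, prod_insert has, card_insert_of_notMem has, Nat.add_sub_cancel,
      Nat.cast_succ]
    calc x a * ∏ i ∈ s, x i - y a * ∏ i ∈ s, y i
        = (x a - y a) * ∏ i ∈ s, x i + y a * (∏ i ∈ s, x i - ∏ i ∈ s, y i) := by ring
      _ ≤ 1 * N ^ #s + N * (#s * N ^ (#s - 1)) :=
        add_le_add (mul_le_mul (by linarith [hxy.1]) hXN hX0 zero_le_one)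
          ((mul_le_mul_of_nonneg_left hdiff hy.1).trans
            (mul_le_mul_of_nonneg_right (hyx.1.trans hxN.1) (by positivity)))
      _ = (#s + 1) * N ^ #s := by rw [hNpow]; ring

theorem lagrangianPoly_mul_pow_sub_le_exNum_krr {k n r : ℕ} {H : Finset (Finset (Fin k))}
    (hH : ∀ f ∈ H, f.card = r) (hint : ∀ e ∈ H, ∀ f ∈ H, (e ∩ f).Nonempty) {p : Fin k → ℝ}
    (hp : p ∈ stdSimplex ℝ (Fin k)) :
    lagrangianPoly H p * n ^ r - H.card * r * n ^ (r - 1) ≤ exNum r n (Krr r) := by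
  set m : Fin k → ℕ := fun i => ⌊p i * n⌋₊
  have hfloor : ∀ i, (m i : ℝ) ≤ p i * n := fun i => Nat.floor_le (by have := hp.1 i; positivity)
  have hm : ∑ i, m i ≤ n := by
    have : ∑ i, (m i : ℝ) ≤ n := by
      simpa [← sum_mul, hp.2] using sum_le_sum fun i (_ : i ∈ univ) => hfloor i
    exact_mod_cast this
  have hround : ∀ f ∈ H, (∏ i ∈ f, p i) * n ^ r - r * n ^ (r - 1) ≤ ∏ i ∈ f, (m i : ℝ) :=
    fun f hf => by
      have := prod_sub_prod_le_card_mul_pow f (fun i _ => Nat.cast_nonneg (m i))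
        (fun i _ => hfloor i) (fun i _ => (Nat.lt_floor_add_one _).le)
        (fun i _ => mul_le_of_le_one_left (Nat.cast_nonneg n) (mem_Icc_of_mem_stdSimplex hp i).2)
      rw [← prod_mul_pow_card, hH f hf] at this
      linarith
  calc lagrangianPoly H p * n ^ r - H.card * r * n ^ (r - 1)
      = ∑ f ∈ H, ((∏ i ∈ f, p i) * n ^ r - r * n ^ (r - 1)) := by
        rw [sum_sub_distrib, sum_const, nsmul_eq_mul, lagrangianPoly, sum_mul, mul_assoc]
    _ ≤ ∑ f ∈ H, ∏ i ∈ f, (m i : ℝ) := sum_le_sum hround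
    _ ≤ exNum r n (Krr r) := by exact_mod_cast sum_prod_le_exNum_krr hH hint hm

theorem lagrangian_mul_pow_sub_le_exNum_krr {k n r : ℕ} {H : Finset (Finset (Fin k))}
    (hH : ∀ f ∈ H, f.card = r) (hint : ∀ e ∈ H, ∀ f ∈ H, (e ∩ f).Nonempty) :
    lagrangian H * n ^ r - H.card * r * n ^ (r - 1) ≤ exNum r n (Krr r) := by
  cases isEmpty_or_nonempty (Fin k)
  · rw [lagrangian_of_isEmpty, zero_mul, zero_sub, neg_le]
    exact (neg_nonpos.2 (Nat.cast_nonneg _)).trans (by positivity)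
  obtain ⟨p, hp, hmax⟩ := exists_isMaxOn_lagrangianPoly H
  rw [hmax.lagrangian_eq hp]
  exact lagrangianPoly_mul_pow_sub_le_exNum_krr hH hint hp

lemma tendsto_pow_div_choose (r : ℕ) :
    Tendsto (fun n : ℕ => (n : ℝ) ^ r / n.choose r) atTop (𝓝 (r.factorial : ℝ)) := by
  have h := (Asymptotics.IsEquivalent.refl (u := fun n : ℕ => (n : ℝ) ^ r)).div
    (isEquivalent_choose r)
  refine h.symm.tendsto_nhds <|
    tendsto_const_nhds.congr' ((eventually_gt_atTop 0).mono fun n hn => ?_)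
  have : (n : ℝ) ^ r ≠ 0 := pow_ne_zero _ (Nat.cast_ne_zero.2 hn.ne')
  simp [field]

lemma tendsto_pow_pred_div_choose {r : ℕ} (hr : 0 < r) :
    Tendsto (fun n : ℕ => (n : ℝ) ^ (r - 1) / n.choose r) atTop (𝓝 0) := by
  have h := (tendsto_inv_atTop_zero.comp tendsto_natCast_atTop_atTop).mul
    (tendsto_pow_div_choose r)
  rw [zero_mul] at h
  refine h.congr' ((eventually_gt_atTop 0).mono fun n hn => ?_)
  have : (n : ℝ) ≠ 0 := Nat.cast_ne_zero.2 hn.ne'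
  rw [Function.comp_apply, ← pow_sub_one_mul hr.ne']
  field_simp

lemma tendsto_mul_pow_add_mul_pow_pred_div_choose {r : ℕ} (hr : 0 < r) (a b : ℝ) :
    Tendsto (fun n : ℕ => (a * n ^ r + b * n ^ (r - 1)) / n.choose r) atTop
      (𝓝 (a * r.factorial)) := by
  simpa [add_div, mul_div_assoc] using
    ((tendsto_pow_div_choose r).const_mul a).add ((tendsto_pow_pred_div_choose hr).const_mul b)

theorem turan_density_Krr_eq_sup_lagrangian_intersecting (r : ℕ) (hr : 3 ≤ r) :
    Filter.Tendsto (fun n : ℕ => (exNum r n (Krr r) : ℝ) / (n.choose r : ℝ)) Filter.atTop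
      (nhds ((r.factorial : ℝ) *
        sSup {x : ℝ | ∃ (k : ℕ) (H : Finset (Finset (Fin k))),
          (∀ e ∈ H, e.card = r) ∧ (∀ e ∈ H, ∀ f ∈ H, (e ∩ f).Nonempty) ∧
          x = lagrangian H})) := by
  change Tendsto _ _ (𝓝 (_ * sSup (intersectingLagrangians r)))
  have hfac : (0 : ℝ) < r.factorial := Nat.cast_pos.2 r.factorial_pos
  have hr0 : 0 < r := by omega
  refine tendsto_order.2 ⟨fun a ha => ?_, fun a ha => ?_⟩
  · obtain ⟨_, ⟨k, H, hH, hint, rfl⟩, hlt⟩ := exists_lt_of_lt_csSup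
      ⟨0, zero_mem_intersectingLagrangians r⟩ ((div_lt_iff₀' hfac).2 ha)
    have hlim := tendsto_mul_pow_add_mul_pow_pred_div_choose hr0 (lagrangian H) (-(H.card * r))
    filter_upwards [hlim.eventually (lt_mem_nhds ((div_lt_iff₀ hfac).1 hlt))] with n hn
    refine hn.trans_le (div_le_div_of_nonneg_right ?_ (Nat.cast_nonneg _))
    simpa [sub_eq_add_neg] using lagrangian_mul_pow_sub_le_exNum_krr (n := n) hH hint
  · have hlim := tendsto_mul_pow_add_mul_pow_pred_div_choose hr0
      (sSup (intersectingLagrangians r)) (Fintype.card (KrrV r))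
    filter_upwards [hlim.eventually (gt_mem_nhds (by rwa [mul_comm])), eventually_gt_atTop 0]
      with n hn hn0
    exact (div_le_div_of_nonneg_right (exNum_krr_le hr hn0) (Nat.cast_nonneg _)).trans_lt hn
end

section
/- Let r ≥ 4 and let (G,s,p) be a target. Then either (i) for every e ∈ G and all 1 ≤ i < j ≤ s with j ∈ e and i ∉ e, the set (e ∖ {j}) ∪ {i} belongs to G, or (ii) 2 ∈ e for every e ∈ G. -/
open Finset

/-- The weight `w_p(e) = (r!/(r-|e|)!) · p_∞^{r-|e|} · ∏_{i ∈ e} p i` of a set `e ⊆ [s]`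
with `|e| ≤ r`, where `q = p_∞`. -/
noncomputable def wissWeight (r : ℕ) (p : ℕ → ℝ) (q : ℝ) (e : Finset ℕ) : ℝ :=
  ((r.factorial : ℝ) / ((r - e.card).factorial : ℝ)) * q ^ (r - e.card) * ∏ i ∈ e, p i

/-- The total weight `w_p(G) = ∑_{e ∈ G} w_p(e)`. -/
noncomputable def wissTotal (r : ℕ) (p : ℕ → ℝ) (q : ℝ) (G : Finset (Finset ℕ)) : ℝ :=
  ∑ e ∈ G, wissWeight r p q e

/-- `(G, s, p)` (with `q = p(∞)`) is a weighted intersecting set system: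
`s ≥ 1`; `G` is an intersecting family of nonempty subsets of `[s] = {1, …, s}`,
each of size at most `r`; `p` takes values in `[0,1]` on `[s]`, is non-increasing on `[s]`,
and together with `q ∈ [0,1]` sums to `1`. -/
def IsWISS (r s : ℕ) (G : Finset (Finset ℕ)) (p : ℕ → ℝ) (q : ℝ) : Prop :=
  1 ≤ s ∧
  (∀ e ∈ G, e.Nonempty ∧ e ⊆ Finset.Icc 1 s ∧ e.card ≤ r) ∧
  (∀ e ∈ G, ∀ f ∈ G, (e ∩ f).Nonempty) ∧
  (∀ i ∈ Finset.Icc 1 s, 0 ≤ p i ∧ p i ≤ 1) ∧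
  (0 ≤ q ∧ q ≤ 1) ∧
  ((∑ i ∈ Finset.Icc 1 s, p i) + q = 1) ∧
  (∀ i j : ℕ, 1 ≤ i → i ≤ j → j ≤ s → p j ≤ p i)

/-- A weighted intersecting set system is principal if every member contains `1`. -/
def WISSPrincipal (G : Finset (Finset ℕ)) : Prop :=
  ∀ e ∈ G, 1 ∈ e

/-- `L_r = (1 - 1/r)^{r-1}`. -/
noncomputable def Lr (r : ℕ) : ℝ := (1 - 1 / (r : ℝ)) ^ (r - 1)

/-- A non-principal w.i.s.s. `(G, s, p)` is a target if its weight is at least that of every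
non-principal w.i.s.s. `(G', s', p')` with `s' ≤ s`, and whenever equality of weights holds
one has `s' = s`, `p s > 0`, and `∑_{e ∈ G} ∑_{i ∈ e} i ≤ ∑_{e' ∈ G'} ∑_{i ∈ e'} i`. -/
def IsTarget (r s : ℕ) (G : Finset (Finset ℕ)) (p : ℕ → ℝ) (q : ℝ) : Prop :=
  IsWISS r s G p q ∧ ¬ WISSPrincipal G ∧
  ∀ (s' : ℕ) (G' : Finset (Finset ℕ)) (p' : ℕ → ℝ) (q' : ℝ),
    s' ≤ s → IsWISS r s' G' p' q' → ¬ WISSPrincipal G' →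
    wissTotal r p' q' G' ≤ wissTotal r p q G ∧
    (wissTotal r p' q' G' = wissTotal r p q G →
      s' = s ∧ 0 < p s ∧ (∑ e ∈ G, ∑ i ∈ e, i) ≤ ∑ e ∈ G', ∑ i ∈ e, i)

/-!
Shifting `j` to `i < j` in the members of `G` (Frankl's shift) keeps a w.i.s.s., does not decrease
the weight as `p i ≥ p j`, and strictly decreases the index sum as soon as it moves a member; by
the tie-break in the definition of a target, a shift that moves a member must therefore make the
family principal. A shift with `i ≥ 2` keeps the family non-principal, so a target is closed under
these shifts, and a failing `(1, j)`-shift forces every member avoiding `1` to contain `j`.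
Moreover a target contains every set of positive weight that meets all its members. This forces
`j = 2`. Compressing, with the shifts `i ≥ 3`, a member containing `1` but not `2` and a member
containing `2` but not `1` gives members `{1} ∪ [3, n)` and `{2} ∪ [3, m)`; enlarging the smaller
one to the size of the other produces members `{1} ∪ [3, k)` and `{2} ∪ [3, k)`, a pair which the
failing `(1, 2)`-shift forbids.

When `p_∞ = 0` only `r`-sets have positive weight. Then `G` is either `r`-uniform or a principal
`r`-uniform family plus one member `g` avoiding `1`; closure under shifts gives `2 ∈ g`, and
maximality forces `s ≤ r`, so that every `r`-set of `G` is `[s]`.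
-/

section Shift

variable {α : Type*} [DecidableEq α] {e : Finset α} {i j : α}

lemma card_insert_erase_of_mem_of_notMem (hj : j ∈ e) (hi : i ∉ e) :
    #(insert i (e.erase j)) = #e := by
  rw [card_insert_of_notMem (fun h => hi (mem_of_mem_erase h)), card_erase_add_one hj]

@[to_additive]
lemma prod_insert_erase_mul {β : Type*} [CommMonoid β] (f : α → β) (hj : j ∈ e) (hi : i ∉ e) :
    (∏ x ∈ insert i (e.erase j), f x) * f j = (∏ x ∈ e, f x) * f i := by
  rw [prod_insert (fun h => hi (mem_of_mem_erase h)), mul_assoc, prod_erase_mul _ _ hj, mul_comm]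

lemma insert_erase_insert_erase (hj : j ∈ e) (hi : i ∉ e) :
    insert j ((insert i (e.erase j)).erase i) = e := by
  rw [erase_insert (fun h => hi (mem_of_mem_erase h)), insert_erase hj]

def shiftMember (G : Finset (Finset α)) (i j : α) (e : Finset α) : Finset α :=
  if j ∈ e ∧ i ∉ e ∧ insert i (e.erase j) ∉ G then insert i (e.erase j) else e

def shiftFamily (G : Finset (Finset α)) (i j : α) : Finset (Finset α) := G.image (shiftMember G i j)

variable {G : Finset (Finset α)} {a b : Finset α}

lemma shiftMember_subset : shiftMember G i j e ⊆ insert i e := by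
  unfold shiftMember
  split_ifs
  · exact insert_subset_insert _ (erase_subset _ _)
  · exact subset_insert _ _

lemma card_shiftMember : #(shiftMember G i j e) = #e := by
  unfold shiftMember
  split_ifs with h
  · exact card_insert_erase_of_mem_of_notMem h.1 h.2.1
  · rfl

lemma mem_and_notMem_of_mem_shiftMember (h : i ∈ shiftMember G i j e) (hi : i ∉ e) :
    j ∈ e ∧ insert i (e.erase j) ∉ G := by
  unfold shiftMember at h
  split_ifs at h with hs
  · exact ⟨hs.1, hs.2.2⟩
  · exact absurd h hi

lemma shiftMember_injOn : Set.InjOn (shiftMember G i j) G := by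
  intro a ha b hb hab
  unfold shiftMember at hab
  split_ifs at hab with hA hB hB
  · rw [← insert_erase_insert_erase hA.1 hA.2.1, hab, insert_erase_insert_erase hB.1 hB.2.1]
  · exact absurd (hab ▸ hb) hA.2.2
  · exact absurd (hab ▸ ha) hB.2.2
  · exact hab

lemma insert_erase_inter_shiftMember_nonempty (hG : ∀ e ∈ G, ∀ f ∈ G, (e ∩ f).Nonempty)
    (ha : a ∈ G) (hb : b ∈ G) (hia : i ∉ a) :
    (insert i (a.erase j) ∩ shiftMember G i j b).Nonempty := by
  unfold shiftMember
  split_ifs with hB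
  · exact ⟨i, by simp⟩
  by_cases hib : i ∈ b
  · exact ⟨i, by simp [hib]⟩
  by_cases hjb : j ∈ b
  · obtain ⟨x, hx⟩ := hG a ha _ (not_not.1 fun h => hB ⟨hjb, hib, h⟩)
    refine ⟨x, ?_⟩
    simp only [mem_inter, mem_insert, mem_erase] at hx ⊢
    grind
  · obtain ⟨x, hx⟩ := hG a ha b hb
    refine ⟨x, ?_⟩
    simp only [mem_inter, mem_insert, mem_erase] at hx ⊢
    grind

lemma shiftMember_inter_nonempty (hG : ∀ e ∈ G, ∀ f ∈ G, (e ∩ f).Nonempty)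
    (ha : a ∈ G) (hb : b ∈ G) : (shiftMember G i j a ∩ shiftMember G i j b).Nonempty := by
  by_cases hA : j ∈ a ∧ i ∉ a ∧ insert i (a.erase j) ∉ G
  · rw [shiftMember, if_pos hA]
    exact insert_erase_inter_shiftMember_nonempty hG ha hb hA.2.1
  by_cases hB : j ∈ b ∧ i ∉ b ∧ insert i (b.erase j) ∉ G
  · rw [inter_comm, shiftMember, if_pos hB]
    exact insert_erase_inter_shiftMember_nonempty hG hb ha hB.2.1
  rw [shiftMember, if_neg hA, shiftMember, if_neg hB]
  exact hG a ha b hb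

end Shift

section Weight

variable {r : ℕ} {p : ℕ → ℝ} {q : ℝ} {e : Finset ℕ} {i j : ℕ}

lemma wissWeight_insert_erase_mul (hj : j ∈ e) (hi : i ∉ e) :
    wissWeight r p q (insert i (e.erase j)) * p j = wissWeight r p q e * p i := by
  simp only [wissWeight, card_insert_erase_of_mem_of_notMem hj hi, mul_assoc,
    prod_insert_erase_mul p hj hi]

lemma wissWeight_nonneg (hq : 0 ≤ q) (hp : ∀ x ∈ e, 0 ≤ p x) : 0 ≤ wissWeight r p q e := by
  unfold wissWeight
  have := prod_nonneg hp
  positivity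

lemma wissWeight_pos (hq : 0 < q ∨ #e = r) (hp : ∀ x ∈ e, 0 < p x) :
    0 < wissWeight r p q e := by
  unfold wissWeight
  have hqe : 0 < q ^ (r - #e) := by
    rcases hq with hq | hq
    · positivity
    · simp [hq]
  have := prod_pos hp
  positivity

lemma wissWeight_eq_zero (hq : q = 0) (he : #e < r) : wissWeight r p q e = 0 := by
  simp [wissWeight, hq, Nat.sub_ne_zero_of_lt he]

lemma wissWeight_le_insert_erase (hq : 0 ≤ q) (hp : ∀ x ∈ e, 0 < p x) (hj : j ∈ e) (hi : i ∉ e)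
    (hpij : p j ≤ p i) : wissWeight r p q e ≤ wissWeight r p q (insert i (e.erase j)) := by
  refine le_of_mul_le_mul_right ?_ (hp j hj)
  rw [wissWeight_insert_erase_mul hj hi]
  exact mul_le_mul_of_nonneg_left hpij (wissWeight_nonneg hq fun x hx => (hp x hx).le)

variable {G : Finset (Finset ℕ)}

lemma wissTotal_le_wissTotal_shiftFamily (hq : 0 ≤ q) (hp : ∀ e ∈ G, ∀ x ∈ e, 0 < p x)
    (hpij : p j ≤ p i) : wissTotal r p q G ≤ wissTotal r p q (shiftFamily G i j) := by
  rw [wissTotal, wissTotal, shiftFamily, sum_image shiftMember_injOn]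
  refine sum_le_sum fun e he => ?_
  unfold shiftMember
  split_ifs with h
  · exact wissWeight_le_insert_erase hq (hp e he) h.1 h.2.1 hpij
  · rfl

lemma sum_sum_shiftFamily_lt (hij : i < j)
    (hbad : ∃ e ∈ G, j ∈ e ∧ i ∉ e ∧ insert i (e.erase j) ∉ G) :
    ∑ e ∈ shiftFamily G i j, ∑ x ∈ e, x < ∑ e ∈ G, ∑ x ∈ e, x := by
  have hlt : ∀ e, j ∈ e → i ∉ e → ∑ x ∈ insert i (e.erase j), x < ∑ x ∈ e, x := fun e hj hi => by
    have := sum_insert_erase_add id hj hi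
    simp only [id] at this
    omega
  rw [shiftFamily, sum_image shiftMember_injOn]
  obtain ⟨e, he, hbad⟩ := hbad
  refine sum_lt_sum (fun a _ => ?_) ⟨e, he, ?_⟩
  · unfold shiftMember
    split_ifs with h
    · exact (hlt a h.1 h.2.1).le
    · rfl
  · rw [shiftMember, if_pos hbad]
    exact hlt e hbad.1 hbad.2.1

end Weight

namespace IsWISS

variable {r s : ℕ} {G H : Finset (Finset ℕ)} {p : ℕ → ℝ} {q : ℝ} {e f v : Finset ℕ}

lemma nonempty (h : IsWISS r s G p q) (he : e ∈ G) : e.Nonempty := (h.2.1 e he).1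

lemma subset_Icc (h : IsWISS r s G p q) (he : e ∈ G) : e ⊆ Icc 1 s := (h.2.1 e he).2.1

lemma card_le (h : IsWISS r s G p q) (he : e ∈ G) : #e ≤ r := (h.2.1 e he).2.2

lemma inter_nonempty (h : IsWISS r s G p q) (he : e ∈ G) (hf : f ∈ G) : (e ∩ f).Nonempty :=
  h.2.2.1 e he f hf

lemma q_nonneg (h : IsWISS r s G p q) : 0 ≤ q := h.2.2.2.2.1.1

lemma antitone (h : IsWISS r s G p q) {i j : ℕ} (hi : 1 ≤ i) (hij : i ≤ j) (hjs : j ≤ s) :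
    p j ≤ p i :=
  h.2.2.2.2.2.2 i j hi hij hjs

lemma of_members (h : IsWISS r s G p q)
    (hmem : ∀ e ∈ H, e.Nonempty ∧ e ⊆ Icc 1 s ∧ #e ≤ r)
    (hint : ∀ e ∈ H, ∀ f ∈ H, (e ∩ f).Nonempty) : IsWISS r s H p q :=
  ⟨h.1, hmem, hint, h.2.2.2⟩

lemma mono (h : IsWISS r s G p q) (hHG : H ⊆ G) : IsWISS r s H p q :=
  h.of_members (fun _ he => h.2.1 _ (hHG he)) fun _ he _ hf => h.inter_nonempty (hHG he) (hHG hf)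

lemma insert_of_forall_inter_nonempty (h : IsWISS r s G p q) (hv : v.Nonempty)
    (hvs : v ⊆ Icc 1 s) (hvr : #v ≤ r) (hmeet : ∀ g ∈ G, (v ∩ g).Nonempty) :
    IsWISS r s (insert v G) p q := by
  refine h.of_members (fun e he => ?_) fun e he f hf => ?_
  · rcases mem_insert.1 he with rfl | he
    · exact ⟨hv, hvs, hvr⟩
    · exact h.2.1 e he
  · rcases mem_insert.1 he with rfl | heG <;> rcases mem_insert.1 hf with rfl | hfG
    · rwa [inter_self]
    · exact hmeet f hfG
    · exact inter_comm e f ▸ hmeet e heG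
    · exact h.inter_nonempty heG hfG

lemma shift (h : IsWISS r s G p q) {i j : ℕ} (hi : i ∈ Icc 1 s) :
    IsWISS r s (shiftFamily G i j) p q := by
  refine h.of_members (fun e he => ?_) fun e he f hf => ?_
  · obtain ⟨a, ha, rfl⟩ := mem_image.1 he
    refine ⟨?_, shiftMember_subset.trans (insert_subset hi (h.subset_Icc ha)), ?_⟩
    · rw [← card_pos, card_shiftMember]
      exact (h.nonempty ha).card_pos
    · exact card_shiftMember.trans_le (h.card_le ha)
  · obtain ⟨a, ha, rfl⟩ := mem_image.1 he
    obtain ⟨b, hb, rfl⟩ := mem_image.1 hf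
    exact shiftMember_inter_nonempty h.2.2.1 ha hb

end IsWISS

lemma insert_Ico_mem_of_forall_insert_erase_mem {G : Finset (Finset ℕ)} {k m s : ℕ} (hkm : k < m)
    (hG : ∀ e ∈ G, ∀ i j, m ≤ i → i < j → j ≤ s → j ∈ e → i ∉ e → insert i (e.erase j) ∈ G)
    {X : Finset ℕ} (hX : X ⊆ Icc m s) (hXG : insert k X ∈ G) :
    insert k (Ico m (m + #X)) ∈ G := by
  induction hn : ∑ x ∈ X, x using Nat.strong_induction_on generalizing X with
  | _ n ih =>
  have hI : #(Ico m (m + #X)) = #X := by simp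
  by_cases hXI : X = Ico m (m + #X)
  · rwa [← hXI]
  obtain ⟨j, hjX, hjI⟩ : ∃ j ∈ X, j ∉ Ico m (m + #X) := by
    by_contra! h
    exact hXI (eq_of_subset_of_card_le h hI.le)
  obtain ⟨i, hiI, hiX⟩ : ∃ i ∈ Ico m (m + #X), i ∉ X := by
    by_contra! h
    exact hXI (eq_of_subset_of_card_le h hI.ge).symm
  have hj := mem_Icc.1 (hX hjX)
  rw [mem_Ico] at hiI hjI
  have hij : i < j := by omega
  have hswap : insert i ((insert k X).erase j) = insert k (insert i (X.erase j)) := by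
    rw [erase_insert_of_ne (by omega), insert_comm]
  have hsum := sum_insert_erase_add id hjX hiX
  simp only [id] at hsum
  rw [← card_insert_erase_of_mem_of_notMem hjX hiX]
  refine ih _ (by omega) ?_ ?_ rfl
  · exact insert_subset (mem_Icc.2 ⟨hiI.1, by omega⟩) ((erase_subset _ _).trans hX)
  · rw [← hswap]
    exact hG _ hXG i j hiI.1 hij hj.2 (mem_insert_of_mem hjX)
      (by rw [mem_insert, not_or]; exact ⟨by omega, hiX⟩)

namespace IsTarget

variable {r s : ℕ} {G H : Finset (Finset ℕ)} {p : ℕ → ℝ} {q : ℝ} {e f g v : Finset ℕ}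
  {i j : ℕ}

lemma isWISS (hT : IsTarget r s G p q) : IsWISS r s G p q := hT.1

lemma exists_one_notMem (hT : IsTarget r s G p q) : ∃ g ∈ G, 1 ∉ g := by
  simpa [WISSPrincipal] using hT.2.1

lemma sum_sum_le (hT : IsTarget r s G p q) (hH : IsWISS r s H p q) (hnp : ¬ WISSPrincipal H)
    (hw : wissTotal r p q G ≤ wissTotal r p q H) :
    ∑ e ∈ G, ∑ x ∈ e, x ≤ ∑ e ∈ H, ∑ x ∈ e, x :=
  have ⟨hle, heq⟩ := hT.2.2 s H p q le_rfl hH hnp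
  (heq (hle.antisymm hw)).2.2

lemma p_pos (hT : IsTarget r s G p q) {k : ℕ} (hk : k ∈ Icc 1 s) : 0 < p k := by
  have hps : 0 < p s := ((hT.2.2 s G p q le_rfl hT.1 hT.2.1).2 rfl).2.1
  rw [mem_Icc] at hk
  exact hps.trans_le (hT.isWISS.antitone hk.1 hk.2 le_rfl)

lemma eq_of_subset (hT : IsTarget r s G p q) (hHG : H ⊆ G) (hnp : ¬ WISSPrincipal H)
    (hw : wissTotal r p q G ≤ wissTotal r p q H) : H = G := by
  by_contra hne
  obtain ⟨e, heG, heH⟩ := exists_of_ssubset (hHG.ssubset_of_ne hne)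
  have hpos : 0 < ∑ x ∈ e, x := by
    obtain ⟨x, hx⟩ := hT.isWISS.nonempty heG
    exact lt_of_lt_of_le (mem_Icc.1 (hT.isWISS.subset_Icc heG hx)).1
      (single_le_sum (f := id) (fun _ _ => Nat.zero_le _) hx)
  have hlt := sum_lt_sum_of_subset (f := fun e => ∑ x ∈ e, x) hHG heG heH hpos
    fun _ _ _ => Nat.zero_le _
  exact (hT.sum_sum_le (hT.isWISS.mono hHG) hnp hw).not_gt hlt

lemma mem_of_forall_inter_nonempty (hT : IsTarget r s G p q) (hvs : v ⊆ Icc 1 s)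
    (hv : v.Nonempty) (hvr : #v ≤ r) (hw : 0 < q ∨ #v = r)
    (hmeet : ∀ g ∈ G, (v ∩ g).Nonempty) : v ∈ G := by
  by_contra hvG
  have hW := hT.isWISS.insert_of_forall_inter_nonempty hv hvs hvr hmeet
  have hnp : ¬ WISSPrincipal (insert v G) := fun h => hT.2.1 fun e he => h e (mem_insert_of_mem he)
  have hle := (hT.2.2 s _ p q le_rfl hW hnp).1
  have hpos : 0 < wissWeight r p q v := wissWeight_pos hw fun x hx => hT.p_pos (hvs hx)
  rw [wissTotal, sum_insert hvG, ← wissTotal] at hle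
  linarith

lemma mem_of_superset (hT : IsTarget r s G p q) (hg : g ∈ G) (hgv : g ⊆ v) (hvs : v ⊆ Icc 1 s)
    (hvr : #v ≤ r) (hw : 0 < q ∨ #v = r) : v ∈ G :=
  hT.mem_of_forall_inter_nonempty hvs ((hT.isWISS.nonempty hg).mono hgv) hvr hw fun _ hf =>
    (hT.isWISS.inter_nonempty hg hf).mono (inter_subset_inter_right hgv)

lemma shiftFamily_principal (hT : IsTarget r s G p q) (h1i : 1 ≤ i) (hij : i < j) (hjs : j ≤ s)
    (hbad : ∃ e ∈ G, j ∈ e ∧ i ∉ e ∧ insert i (e.erase j) ∉ G) :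
    WISSPrincipal (shiftFamily G i j) := by
  by_contra hnp
  have hS := hT.isWISS.shift (j := j) (mem_Icc.2 ⟨h1i, by omega⟩)
  have hw := wissTotal_le_wissTotal_shiftFamily (r := r) hT.isWISS.q_nonneg
    (fun _ he _ hx => hT.p_pos (hT.isWISS.subset_Icc he hx)) (hT.isWISS.antitone h1i hij.le hjs)
  exact (hT.sum_sum_le hS hnp hw).not_gt (sum_sum_shiftFamily_lt hij hbad)

lemma insert_erase_mem (hT : IsTarget r s G p q) (h2i : 2 ≤ i) (hij : i < j) (hjs : j ≤ s)
    (he : e ∈ G) (hje : j ∈ e) (hie : i ∉ e) : insert i (e.erase j) ∈ G := by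
  by_contra hnm
  have hP := hT.shiftFamily_principal (by omega) hij hjs ⟨e, he, hje, hie, hnm⟩
  obtain ⟨g, hg, hg1⟩ := hT.exists_one_notMem
  have h1 := shiftMember_subset (hP _ (mem_image_of_mem _ hg))
  exact (mem_insert.1 h1).elim (by omega) hg1

lemma forall_mem_of_insert_one_erase_notMem (hT : IsTarget r s G p q) (he : e ∈ G)
    (h1e : 1 ∉ e) (hje : j ∈ e) (hnm : insert 1 (e.erase j) ∉ G) :
    ∀ g ∈ G, 1 ∉ g → j ∈ g ∧ insert 1 (g.erase j) ∉ G := by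
  have hj := mem_Icc.1 (hT.isWISS.subset_Icc he hje)
  have hj1 : j ≠ 1 := fun h => h1e (h ▸ hje)
  have hP := hT.shiftFamily_principal le_rfl (by omega) hj.2 ⟨e, he, hje, h1e, hnm⟩
  exact fun g hg hg1 => mem_and_notMem_of_mem_shiftMember (hP _ (mem_image_of_mem _ hg)) hg1

lemma two_mem_of_forall_one_notMem_eq (hT : IsTarget r s G p q) (hg : g ∈ G) (hg1 : 1 ∉ g)
    (huniq : ∀ f ∈ G, 1 ∉ f → f = g) : 2 ∈ g := by
  by_contra h2g
  obtain ⟨j, hj⟩ := hT.isWISS.nonempty hg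
  have hj1 : j ≠ 1 := ne_of_mem_of_not_mem hj hg1
  have hj2 : j ≠ 2 := ne_of_mem_of_not_mem hj h2g
  have hjs := mem_Icc.1 (hT.isWISS.subset_Icc hg hj)
  have hg' := hT.insert_erase_mem le_rfl (by omega) hjs.2 hg hj h2g
  have hjg := huniq _ hg' (by simp [hg1]) ▸ hj
  simp [hj2] at hjg

lemma card_eq_of_forall_one_notMem_eq (hT : IsTarget r s G p q) (hg : g ∈ G) (hg1 : 1 ∉ g)
    (huniq : ∀ f ∈ G, 1 ∉ f → f = g) (hrs : r < s) : #g = r := by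
  have hgs : g ⊆ Icc 2 s := fun x hx => by
    have := mem_Icc.1 (hT.isWISS.subset_Icc hg hx)
    have := ne_of_mem_of_not_mem hx hg1
    exact mem_Icc.2 ⟨by omega, by omega⟩
  obtain ⟨v, hgv, hvs, hv⟩ :=
    exists_subsuperset_card_eq hgs (hT.isWISS.card_le hg) (by rw [Nat.card_Icc]; omega)
  have hvG := hT.mem_of_superset hg hgv (hvs.trans (Icc_subset_Icc_left (by norm_num))) hv.le
    (Or.inr hv)
  rw [← huniq v hvG fun h => by simpa using hvs h, hv]

lemma forall_card_eq_or_forall_two_mem (hT : IsTarget r s G p q) (hq : q = 0) :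
    (∀ e ∈ G, #e = r) ∨ ∀ e ∈ G, 2 ∈ e := by
  set Z := G.filter (#· = r)
  have hZG : Z ⊆ G := filter_subset _ _
  have hwZ : wissTotal r p q G ≤ wissTotal r p q Z := by
    have h0 : ∑ e ∈ G.filter (¬ #· = r), wissWeight r p q e = 0 :=
      sum_eq_zero fun e he => wissWeight_eq_zero hq <|
        lt_of_le_of_ne (hT.isWISS.card_le (mem_filter.1 he).1) (mem_filter.1 he).2
    rw [wissTotal, ← sum_filter_add_sum_filter_not G (#· = r), h0, add_zero, wissTotal]
  by_cases hZP : WISSPrincipal Z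
  swap
  · left
    intro e he
    rw [← hT.eq_of_subset hZG hZP hwZ] at he
    exact (mem_filter.1 he).2
  right
  obtain ⟨g, hg, hg1⟩ := hT.exists_one_notMem
  have hgZ : g ∉ Z := fun h => hg1 (hZP g h)
  have hgr : #g < r :=
    lt_of_le_of_ne (hT.isWISS.card_le hg) fun h => hgZ (mem_filter.2 ⟨hg, h⟩)
  have hG : insert g Z = G := by
    refine hT.eq_of_subset (insert_subset hg hZG) (fun h => hg1 (h g (mem_insert_self _ _))) ?_
    have : wissTotal r p q (insert g Z) = wissTotal r p q Z := by
      simp only [wissTotal, sum_insert hgZ, wissWeight_eq_zero hq hgr, zero_add]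
    exact hwZ.trans_eq this.symm
  have huniq : ∀ f ∈ G, 1 ∉ f → f = g := fun f hf hf1 => by
    rw [← hG, mem_insert] at hf
    exact hf.resolve_right fun hfZ => hf1 (hZP f hfZ)
  have h2g := hT.two_mem_of_forall_one_notMem_eq hg hg1 huniq
  have hsr : s ≤ r := not_lt.1 fun hrs =>
    hgr.ne (hT.card_eq_of_forall_one_notMem_eq hg hg1 huniq hrs)
  intro e he
  rw [← hG, mem_insert] at he
  rcases he with rfl | he
  · exact h2g
  have heI : e = Icc 1 s := eq_of_subset_of_card_le (hT.isWISS.subset_Icc (hZG he))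
    (by simp [(mem_filter.1 he).2, hsr])
  exact heI ▸ hT.isWISS.subset_Icc hg h2g

lemma eq_two_of_insert_one_erase_notMem (hT : IsTarget r s G p q)
    (hpos : ∀ f ∈ G, 0 < q ∨ #f = r) (he : e ∈ G)
    (h1e : 1 ∉ e) (hje : j ∈ e) (hnm : insert 1 (e.erase j) ∉ G) : j = 2 := by
  have hstar := hT.forall_mem_of_insert_one_erase_notMem he h1e hje hnm
  have hj := mem_Icc.1 (hT.isWISS.subset_Icc he hje)
  have hj1 : j ≠ 1 := fun h => h1e (h ▸ hje)
  by_contra hj2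
  have h2 : ∀ g ∈ G, 1 ∉ g → 2 ∈ g := by
    intro g hg hg1
    by_contra h2g
    have hg' := hT.insert_erase_mem le_rfl (by omega) hj.2 hg (hstar g hg hg1).1 h2g
    exact hj2 (by simpa using (hstar _ hg' (by simp [hg1])).1)
  apply hnm
  have hcard := card_insert_erase_of_mem_of_notMem hje h1e
  refine hT.mem_of_forall_inter_nonempty ?_ (insert_nonempty _ _) (hcard ▸ hT.isWISS.card_le he)
    (hcard ▸ hpos e he) fun g hg => ?_
  · exact insert_subset (mem_Icc.2 ⟨le_rfl, by omega⟩)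
      ((erase_subset _ _).trans (hT.isWISS.subset_Icc he))
  · by_cases hg1 : 1 ∈ g
    · exact ⟨1, by simp [hg1]⟩
    · exact ⟨2, by simp [h2 g hg hg1, h2 e he h1e, Ne.symm hj2]⟩

lemma insert_Ico_mem (hT : IsTarget r s G p q) {k : ℕ} (hk : k < 3) (hf : f ∈ G) (hkf : k ∈ f)
    (hf3 : ∀ x ∈ f, x ≠ k → 3 ≤ x) : insert k (Ico 3 (2 + #f)) ∈ G := by
  have hX : f.erase k ⊆ Icc 3 s := fun x hx => mem_Icc.2
    ⟨hf3 x (mem_of_mem_erase hx) (ne_of_mem_erase hx),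
      (mem_Icc.1 (hT.isWISS.subset_Icc hf (mem_of_mem_erase hx))).2⟩
  have hshift := insert_Ico_mem_of_forall_insert_erase_mem hk
    (fun e he i j hi hij hjs hje hie => hT.insert_erase_mem (by omega) hij hjs he hje hie) hX
    (by rwa [insert_erase hkf])
  have hcard : 3 + #(f.erase k) = 2 + #f := by
    have := card_erase_add_one hkf
    omega
  rwa [hcard] at hshift

lemma forall_two_mem_of_insert_one_erase_two_notMem (hT : IsTarget r s G p q)
    (hpos : ∀ f ∈ G, 0 < q ∨ #f = r) (he : e ∈ G)
    (h1e : 1 ∉ e) (h2e : 2 ∈ e) (hnm : insert 1 (e.erase 2) ∉ G) : ∀ f ∈ G, 2 ∈ f := by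
  have hstar := hT.forall_mem_of_insert_one_erase_notMem he h1e h2e hnm
  intro f hf
  by_contra h2f
  have h1f : 1 ∈ f := by
    by_contra h1f
    exact h2f (hstar f hf h1f).1
  have hA := hT.insert_Ico_mem (k := 1) (by norm_num) hf h1f fun x hx hx1 => by
    have := mem_Icc.1 (hT.isWISS.subset_Icc hf hx)
    have : x ≠ 2 := ne_of_mem_of_not_mem hx h2f
    omega
  have hB := hT.insert_Ico_mem (k := 2) (by norm_num) he h2e fun x hx hx2 => by
    have := mem_Icc.1 (hT.isWISS.subset_Icc he hx)
    have : x ≠ 1 := ne_of_mem_of_not_mem hx h1e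
    omega
  have hAB : ∀ n, insert 2 (Ico 3 n) ∈ G → insert 1 (Ico 3 n) ∉ G := fun n h => by
    simpa using (hstar _ h (by simp)).2
  have hcard : ∀ {k g}, k < 3 → g ∈ G → #(insert k (Ico 3 (2 + #g))) = #g := fun hk hg => by
    have := (hT.isWISS.nonempty hg).card_pos
    rw [card_insert_of_notMem (by rw [mem_Ico]; omega), Nat.card_Ico]
    omega
  have hmem : ∀ {u v w}, u ∈ G → u ⊆ v → v ⊆ Icc 1 s → w ∈ G → #v = #w → v ∈ G :=
    fun hu huv hv hw hvw => hT.mem_of_superset hu huv hv (hvw ▸ hT.isWISS.card_le hw)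
      (hvw ▸ hpos _ hw)
  have hIcc : ∀ {k l n}, k ∈ Icc 1 s → insert l (Ico 3 n) ∈ G → insert k (Ico 3 n) ⊆ Icc 1 s :=
    fun hk h => insert_subset hk ((subset_insert _ _).trans (hT.isWISS.subset_Icc h))
  -- Growing the smaller of the two compressed members to the size of the other gives a pair
  -- excluded by `hAB`.
  rcases le_total #f #e with hfe | hef
  · refine hAB _ hB (hmem hA ?_ (hIcc (hT.isWISS.subset_Icc hf h1f) hB) he
      (hcard (by norm_num) he))
    exact insert_subset_insert _ (Ico_subset_Ico_right (by omega))
  · refine hAB _ (hmem hB ?_ (hIcc (hT.isWISS.subset_Icc he h2e) hA) hf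
      (hcard (by norm_num) hf)) hA
    exact insert_subset_insert _ (Ico_subset_Ico_right (by omega))

end IsTarget

theorem target_compressed_or_contains_two_general (r s : ℕ)
    (G : Finset (Finset ℕ)) (p : ℕ → ℝ) (q : ℝ) (hT : IsTarget r s G p q) :
    (∀ e ∈ G, ∀ i j : ℕ, 1 ≤ i → i < j → j ≤ s → j ∈ e → i ∉ e →
      insert i (e.erase j) ∈ G) ∨
    (∀ e ∈ G, 2 ∈ e) := by
  have hcases : (∀ e ∈ G, 2 ∈ e) ∨ ∀ e ∈ G, 0 < q ∨ #e = r := by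
    rcases hT.isWISS.q_nonneg.lt_or_eq with hq | hq
    · exact Or.inr fun _ _ => Or.inl hq
    · exact (hT.forall_card_eq_or_forall_two_mem hq.symm).symm.imp_right
        fun h e he => Or.inr (h e he)
  rcases hcases with h2 | hpos
  · exact Or.inr h2
  refine or_iff_not_imp_left.2 fun hbad => ?_
  push Not at hbad
  obtain ⟨e, he, i, j, h1i, hij, hjs, hje, hie, hnm⟩ := hbad
  obtain rfl : i = 1 := by
    by_contra hi
    exact hnm (hT.insert_erase_mem (by omega) hij hjs he hje hie)
  obtain rfl : j = 2 := hT.eq_two_of_insert_one_erase_notMem hpos he hie hje hnm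
  exact hT.forall_two_mem_of_insert_one_erase_two_notMem hpos he hie hje hnm

theorem target_compressed_or_contains_two (r s : ℕ) (hr : 4 ≤ r)
    (G : Finset (Finset ℕ)) (p : ℕ → ℝ) (q : ℝ) (hT : IsTarget r s G p q) :
    (∀ e ∈ G, ∀ i j : ℕ, 1 ≤ i → i < j → j ≤ s → j ∈ e → i ∉ e →
      insert i (e.erase j) ∈ G) ∨
    (∀ e ∈ G, 2 ∈ e) :=
  target_compressed_or_contains_two_general r s G p q hT
end

section
/- Let r and s be positive integers, let p : [s] ∪ {∞} → [0,1] satisfy ∑_{x∈[s]∪{∞}} p(x) = 1 and p(∞) ≥ p(s) > 0, and let e ⊆ [s] satisfy |e| ≤ r and s ∈ e. Define p̄ : [s−1] ∪ {∞} → [0,1] by p̄(i) = p(i) for i ∈ [s−1] and p̄(∞) = p(∞) + p(s). Then w_{p̄}(e ∖ {s}) ≥ 2·w_p(e). -/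
open Finset

/-! With `n = r - |e|`, removing `s` from `e` turns the factor `(r!/n!) q^n p(s)` of the weight
into `(r!/(n+1)!) (q + p(s))^(n+1)`, so the claim reduces to `2(n+1) p q^n ≤ (q+p)^(n+1)`
for `0 ≤ p ≤ q`. For `n = 0` this is `p ≤ q`. For `n ≥ 1` keep three terms of the binomial
expansion: the excess `q^(n-1) (q² - (n+1) q p + n(n+1)/2 p²)` is nonnegative because
`n(n+1)/2 ≥ (n+1)²/4`. -/

theorem binomial_three_terms_le_add_pow {R : Type*} [CommSemiring R] [PartialOrder R]
    [IsOrderedRing R] {x y : R} (hx : 0 ≤ x) (hy : 0 ≤ y) (m : ℕ) :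
    x ^ (m + 2) + (m + 2) * x ^ (m + 1) * y + (m + 2).choose 2 * x ^ m * y ^ 2 ≤ (x + y) ^ (m + 2) := by
  rw [add_comm x, add_pow]
  calc _ = ∑ k ∈ {0, 1, 2}, y ^ k * x ^ (m + 2 - k) * (m + 2).choose k := by
        simp only [mem_insert, mem_singleton, zero_ne_one, OfNat.zero_ne_ofNat, OfNat.one_ne_ofNat,
          or_self, not_false_eq_true, sum_insert, sum_singleton, pow_zero, pow_one, tsub_zero,
          Nat.add_one_sub_one, add_tsub_cancel_right, Nat.choose_zero_right, Nat.choose_one_right,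
          Nat.cast_one, Nat.cast_add, Nat.cast_ofNat, one_mul, mul_one]
        ring
    _ ≤ _ := sum_le_sum_of_subset_of_nonneg
        (by intro k; simp only [mem_insert, mem_singleton, mem_range]; omega)
        (fun _ _ _ => by positivity)

theorem two_mul_succ_mul_le_add_pow {p q : ℝ} (hp : 0 ≤ p) (hpq : p ≤ q) (n : ℕ) :
    2 * ((n + 1) * p * q ^ n) ≤ (q + p) ^ (n + 1) := by
  obtain _ | m := n
  · simp only [CharP.cast_eq_zero, zero_add, one_mul, pow_zero, mul_one, pow_one]
    linarith
  · have hq : 0 ≤ q := hp.trans hpq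
    have hchoose : ((m + 2).choose 2 : ℝ) = (m + 2) * (m + 1) / 2 := by
      rw [Nat.cast_choose_two]; push_cast; ring
    have hbinom := binomial_three_terms_le_add_pow hq hp m
    rw [hchoose] at hbinom
    calc 2 * (((m + 1 : ℕ) + 1 : ℝ) * p * q ^ (m + 1))
        ≤ q ^ (m + 2) + (m + 2) * q ^ (m + 1) * p + (m + 2) * (m + 1) / 2 * q ^ m * p ^ 2 := by
          rw [← sub_nonneg]
          calc (0 : ℝ) ≤ q ^ m * ((q - (m + 2) / 2 * p) ^ 2 + m * (m + 2) / 4 * p ^ 2) := by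
                positivity
            _ = _ := by push_cast; ring
      _ ≤ (q + p) ^ (m + 1 + 1) := hbinom

section
variable (r : ℕ) (p : ℕ → ℝ) {e : Finset ℕ} {s : ℕ}

theorem wissWeight_of_mem (q : ℝ) (hse : s ∈ e) :
    wissWeight r p q e = r.factorial / (r - e.card + 1).factorial *
      (((r - e.card : ℕ) + 1 : ℝ) * p s * q ^ (r - e.card)) * ∏ i ∈ e.erase s, p i := by
  rw [wissWeight, ← mul_prod_erase e p hse, Nat.factorial_succ]
  push_cast
  field_simp

theorem wissWeight_erase (q : ℝ) (hse : s ∈ e) (hcard : e.card ≤ r) :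
    wissWeight r p q (e.erase s) =
      r.factorial / (r - e.card + 1).factorial * q ^ (r - e.card + 1) * ∏ i ∈ e.erase s, p i := by
  have : r - (e.erase s).card = r - e.card + 1 := by
    have := card_pos.mpr ⟨s, hse⟩
    rw [card_erase_of_mem hse]; omega
  rw [wissWeight, this]

end

theorem weight_after_removing_s_general (r s : ℕ)
    (p : ℕ → ℝ) (q : ℝ)
    (hp01 : ∀ i ∈ Finset.Icc 1 s, 0 ≤ p i ∧ p i ≤ 1)
    (hqs : p s ≤ q) (hps : 0 < p s)
    (e : Finset ℕ) (hes : e ⊆ Finset.Icc 1 s) (hcard : e.card ≤ r) (hse : s ∈ e) :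
    2 * wissWeight r p q e ≤ wissWeight r p (q + p s) (e.erase s) := by
  have hprod : 0 ≤ ∏ i ∈ e.erase s, p i :=
    prod_nonneg fun i hi => (hp01 i (hes (mem_of_mem_erase hi))).1
  rw [wissWeight_of_mem r p q hse, wissWeight_erase r p _ hse hcard, ← mul_assoc, mul_left_comm]
  gcongr
  exact two_mul_succ_mul_le_add_pow hps.le hqs (r - e.card)

theorem weight_after_removing_s (r s : ℕ) (hr : 1 ≤ r) (hs : 1 ≤ s)
    (p : ℕ → ℝ) (q : ℝ)
    (hp01 : ∀ i ∈ Finset.Icc 1 s, 0 ≤ p i ∧ p i ≤ 1)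
    (hq0 : 0 ≤ q) (hq1 : q ≤ 1)
    (hsum : (∑ i ∈ Finset.Icc 1 s, p i) + q = 1)
    (hqs : p s ≤ q) (hps : 0 < p s)
    (e : Finset ℕ) (hes : e ⊆ Finset.Icc 1 s) (hcard : e.card ≤ r) (hse : s ∈ e) :
    2 * wissWeight r p q e ≤ wissWeight r p (q + p s) (e.erase s) :=
  weight_after_removing_s_general r s p q hp01 hqs hps e hes hcard hse
end

section
/- Let r ≥ 3 be an integer. For every ε > 0 there exist δ > 0 and n₀ ∈ ℕ such that: if S is a star on n ≥ n₀ vertices with star partition (A,B) and S has at least (e_r − δ)·n^r edges, where e_r = (1−1/r)^{r−1}/r!, then | |A| − n/r | ≤ ε·n. -/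
/-!
Writing `x = |A|/n`, an edge of a star is a vertex of `A` together with an `(r-1)`-subset of
the complement, so `|S| ≤ |A| · C(n - |A|, r - 1) ≤ x (1 - x)^(r-1) n^r / (r-1)!`.
By AM–GM the function `x (1 - x)^(r-1)` has a unique maximum on `[0, 1]`, at `x = 1/r`, where
it equals `(r-1)! e_r`. By compactness, values within some `η` of that maximum are taken only
`ε`-close to `1/r`, and `δ = η / (r-1)!` works for every `n`.
-/

open Finset

-- AM–GM in exponential form: `u ≤ exp (u - 1)` and `v ≤ exp (v - 1)`.
theorem mul_pow_lt_one_of_add_mul_eq {u v : ℝ} {m : ℕ} (hu : 0 ≤ u) (hv : 0 ≤ v)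
    (huv : u + m * v = m + 1) (hu₁ : u ≠ 1) : u * v ^ m < 1 := by
  calc u * v ^ m ≤ u * Real.exp (v - 1) ^ m := by
        gcongr; linarith [Real.add_one_le_exp (v - 1)]
    _ < Real.exp (u - 1) * Real.exp (v - 1) ^ m := by
        gcongr; linarith [Real.add_one_lt_exp (sub_ne_zero.2 hu₁)]
    _ = 1 := by
        rw [← Real.exp_nat_mul, ← Real.exp_add, show u - 1 + m * (v - 1) = 0 by linarith,
          Real.exp_zero]

theorem mul_one_sub_pow_lt {m : ℕ} (hm : m ≠ 0) {x : ℝ} (hx₀ : 0 ≤ x) (hx₁ : x ≤ 1)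
    (hx : x ≠ 1 / (m + 1)) : x * (1 - x) ^ m < 1 / (m + 1) * (1 - 1 / (m + 1)) ^ m := by
  have hm₀ : (0 : ℝ) < m := by positivity
  have hx₁' : 0 ≤ 1 - x := by linarith
  have key : ((m + 1) * x) * ((m + 1) * (1 - x) / m) ^ m < 1 := by
    refine mul_pow_lt_one_of_add_mul_eq (by positivity) (by positivity) (by field_simp; ring) ?_
    contrapose! hx
    field_simp
    linarith
  have hc : 1 - 1 / ((m : ℝ) + 1) = m / (m + 1) := by field_simp; ring
  have hu : (m + 1) * x * (1 / (m + 1)) = x := by field_simp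
  have hv : (m + 1) * (1 - x) / m * (m / (m + 1)) = 1 - x := by field_simp
  rw [hc]
  calc x * (1 - x) ^ m
      = ((m + 1) * x * (1 / (m + 1))) * ((m + 1) * (1 - x) / m * (m / (m + 1))) ^ m := by
        rw [hu, hv]
    _ = ((m + 1) * x) * ((m + 1) * (1 - x) / m) ^ m * (1 / (m + 1) * (m / (m + 1)) ^ m) := by
        rw [mul_pow]; ring
    _ < 1 * (1 / (m + 1) * (m / (m + 1)) ^ m) := by gcongr
    _ = _ := one_mul _

theorem IsCompact.exists_pos_forall_sub_le_imp_dist_lt {X : Type*} [PseudoMetricSpace X]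
    {K : Set X} (hK : IsCompact K) {f : X → ℝ} (hf : ContinuousOn f K) {x₀ : X}
    (hmax : ∀ x ∈ K, x ≠ x₀ → f x < f x₀) {ε : ℝ} (hε : 0 < ε) :
    ∃ η > 0, ∀ x ∈ K, f x₀ - η ≤ f x → dist x x₀ < ε := by
  set L := K ∩ {x | ε ≤ dist x x₀}
  have hL : IsCompact L :=
    hK.inter_right (isClosed_le continuous_const (continuous_id.dist continuous_const))
  rcases L.eq_empty_or_nonempty with hempty | hne
  · refine ⟨1, one_pos, fun x hx _ ↦ ?_⟩
    by_contra! h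
    exact hempty.subset ⟨hx, h⟩
  · obtain ⟨y, ⟨hyK, hy⟩, hymax⟩ := hL.exists_isMaxOn hne (hf.mono Set.inter_subset_left)
    have hyx₀ : y ≠ x₀ := by rintro rfl; exact hε.not_ge (by simpa using hy)
    refine ⟨(f x₀ - f y) / 2, by linarith [hmax y hyK hyx₀], fun x hx hfx ↦ ?_⟩
    by_contra! h
    linarith [hymax ⟨hx, h⟩ |>.out, hmax y hyK hyx₀]

section Star

variable {α : Type*} [Fintype α] [DecidableEq α] {r : ℕ} {S : Finset (Finset α)} {A : Finset α}

theorem card_le_card_mul_choose_of_star (hS : ∀ e ∈ S, e.card = r)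
    (hA : ∀ e ∈ S, (e ∩ A).card = 1) :
    S.card ≤ A.card * Aᶜ.card.choose (r - 1) := by
  calc S.card ≤ (A.powersetCard 1 ×ˢ Aᶜ.powersetCard (r - 1)).card := by
        refine card_le_card_of_injOn (fun e ↦ (e ∩ A, e \ A)) (fun e he ↦ ?_) ?_
        · have hsplit := card_sdiff_add_card_inter e A
          simp only [mem_coe, mem_product, mem_powersetCard]
          refine ⟨⟨inter_subset_right, hA e he⟩,
            sdiff_eq_inter_compl e A ▸ inter_subset_right, by grind⟩
        · intro e₁ _ e₂ _ h
          simp only [Prod.mk.injEq] at h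
          rw [← sdiff_union_inter e₁ A, ← sdiff_union_inter e₂ A, h.1, h.2]
    _ = A.card * Aᶜ.card.choose (r - 1) := by
        rw [card_product, card_powersetCard, card_powersetCard, Nat.choose_one_right]

theorem card_le_of_star [Nonempty α] {m : ℕ} (hS : ∀ e ∈ S, e.card = m + 1)
    (hA : ∀ e ∈ S, (e ∩ A).card = 1) :
    let x : ℝ := A.card / Fintype.card α
    (S.card : ℝ) ≤ x * (1 - x) ^ m * (Fintype.card α : ℝ) ^ (m + 1) / m.factorial := by
  intro x
  have hn : (0 : ℝ) < Fintype.card α := by exact_mod_cast Fintype.card_pos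
  have hAc : (Aᶜ.card : ℝ) = Fintype.card α - A.card := by
    rw [card_compl, Nat.cast_sub (card_le_univ A)]
  calc (S.card : ℝ) ≤ A.card * (Aᶜ.card.choose m : ℝ) := by
        exact_mod_cast card_le_card_mul_choose_of_star hS hA
    _ ≤ A.card * ((Aᶜ.card : ℝ) ^ m / m.factorial) := by
        gcongr; exact Nat.choose_le_pow_div m _
    _ = x * (1 - x) ^ m * (Fintype.card α : ℝ) ^ (m + 1) / m.factorial := by
        rw [hAc]; simp only [x]; rw [one_sub_div hn.ne', div_pow, pow_succ]; field_simp

end Star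

theorem dense_star_is_balanced (r : ℕ) (hr : 3 ≤ r) (ε : ℝ) (hε : 0 < ε) :
    ∃ δ : ℝ, 0 < δ ∧ ∃ n₀ : ℕ, ∀ n : ℕ, n ≥ n₀ →
      ∀ (S : Finset (Finset (Fin n))) (A : Finset (Fin n)),
        (∀ e ∈ S, e.card = r) →
        -- (A, Aᶜ) is a star partition of S
        (∀ e ∈ S, (e ∩ A).card = 1) →
        -- S has at least (e_r - δ) n^r edges, where e_r = (1 - 1/r)^{r-1} / r!
        ((1 - 1 / (r : ℝ)) ^ (r - 1) / (r.factorial : ℝ) - δ) * (n : ℝ) ^ r ≤ (S.card : ℝ) →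
        |(A.card : ℝ) - (n : ℝ) / (r : ℝ)| ≤ ε * (n : ℝ) := by
  obtain ⟨m, rfl⟩ : ∃ m, r = m + 1 := ⟨r - 1, by omega⟩
  set g : ℝ → ℝ := fun x ↦ x * (1 - x) ^ m
  obtain ⟨η, hη, hnear⟩ := isCompact_Icc.exists_pos_forall_sub_le_imp_dist_lt
    (by fun_prop : Continuous g).continuousOn
    (fun x hx hne ↦ mul_one_sub_pow_lt (by omega) hx.1 hx.2 hne) hε
  refine ⟨η / m.factorial, by positivity, 1, fun n hn S A hS hA hdense ↦ ?_⟩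
  have : Nonempty (Fin n) := ⟨⟨0, hn⟩⟩
  have hn : (0 : ℝ) < n := by exact_mod_cast hn
  have hx : (A.card / n : ℝ) ∈ Set.Icc 0 1 :=
    ⟨by positivity, div_le_one_of_le₀ (by simpa using card_le_univ A) hn.le⟩
  have he : (1 - 1 / ((m + 1 : ℕ) : ℝ)) ^ (m + 1 - 1) / ((m + 1).factorial : ℝ)
      = g (1 / (m + 1)) / m.factorial := by
    simp only [Nat.cast_add, Nat.cast_one, one_div, add_tsub_cancel_right, Nat.factorial_succ,
      Nat.cast_mul, g]
    field_simp
  have hlow : g (1 / (m + 1)) - η ≤ g (A.card / n) := by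
    have := hdense.trans (by simpa using card_le_of_star hS hA)
    rw [he, ← sub_div, div_mul_eq_mul_div, div_le_div_iff_of_pos_right (by positivity)] at this
    exact le_of_mul_le_mul_right this (by positivity)
  have hclose := hnear _ hx hlow
  rw [Real.dist_eq] at hclose
  calc |(A.card : ℝ) - n / ((m + 1 : ℕ) : ℝ)| = n * |(A.card / n : ℝ) - 1 / (m + 1)| := by
        rw [← abs_of_pos hn, ← abs_mul, abs_of_pos hn]; push_cast; field_simp
    _ ≤ n * ε := by gcongr
    _ = ε * n := mul_comm _ _
end

section
/- Fix an integer r ≥ 2. If (G,s,p) is a principal weighted intersecting set system, then w_p(G) ≤ r·p(1)·(1−p(1))^{r−1} ≤ (1−1/r)^{r−1}. -/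
open Finset

/-!
Removing the common element `1` from a member `e` of a principal system gives
`w_p(e) = r p(1) w'(e ∖ {1})`, where `w'` is the weight for `r - 1`. For `f ⊆ {2, …, s}`,
`w'(f)` collects the terms of the multinomial expansion of
`(p_∞ + p(2) + ⋯ + p(s))^{r-1} = (1 - p(1))^{r-1}` in which each index of `f` occurs once and
no other index occurs; this proves the first bound. The second is AM-GM for `r - 1` copies of
`r(1 - x)/(r - 1)` and one copy of `r x`.
-/

-- The weight `w_p` with `r` replaced by `m`, with `m!/(m-|f|)!` written as a falling factorial
-- so that it vanishes when `|f| > m`.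
noncomputable def descWeight {α : Type*} (p : α → ℝ) (q : ℝ) (m : ℕ) (f : Finset α) : ℝ :=
  m.descFactorial #f * q ^ (m - #f) * ∏ i ∈ f, p i

section descWeight

variable {α : Type*} {p : α → ℝ} {q : ℝ}

lemma descWeight_nonneg {m : ℕ} {f : Finset α} (hq : 0 ≤ q) (hp : ∀ i ∈ f, 0 ≤ p i) :
    0 ≤ descWeight p q m f :=
  mul_nonneg (by positivity) (prod_nonneg hp)

lemma descWeight_insert [DecidableEq α] {a : α} {f : Finset α} (ha : a ∉ f) (m : ℕ) :
    descWeight p q m (insert a f) = m * p a * descWeight p q (m - 1) f := by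
  cases m with
  | zero => simp [descWeight]
  | succ m =>
    simp only [descWeight, card_insert_of_notMem ha, Nat.succ_descFactorial_succ,
      prod_insert ha, Nat.add_sub_add_right, Nat.add_sub_cancel]
    push_cast
    ring

lemma sum_powerset_descWeight_le [DecidableEq α] (hq : 0 ≤ q) {S : Finset α}
    (hp : ∀ i ∈ S, 0 ≤ p i) (m : ℕ) :
    ∑ f ∈ S.powerset, descWeight p q m f ≤ (q + ∑ i ∈ S, p i) ^ m := by
  induction S using Finset.induction_on generalizing m with
  | empty => simp [descWeight]
  | insert a S ha ih =>
    have hpS : ∀ i ∈ S, 0 ≤ p i := fun i hi => hp i (mem_insert_of_mem hi)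
    have hpa : 0 ≤ p a := hp a (mem_insert_self a S)
    have hX : 0 ≤ q + ∑ i ∈ S, p i := add_nonneg hq (sum_nonneg hpS)
    calc ∑ f ∈ (insert a S).powerset, descWeight p q m f
        = ∑ f ∈ S.powerset, descWeight p q m f
          + m * p a * ∑ f ∈ S.powerset, descWeight p q (m - 1) f := by
          rw [sum_powerset_insert ha, mul_sum]
          congr 1
          refine sum_congr rfl fun f hf => descWeight_insert (fun haf => ha ?_) m
          exact mem_powerset.1 hf haf
      _ ≤ (q + ∑ i ∈ S, p i) ^ m + m * p a * (q + ∑ i ∈ S, p i) ^ (m - 1) := by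
          gcongr
          exacts [ih hpS m, ih hpS (m - 1)]
      _ ≤ (q + ∑ i ∈ insert a S, p i) ^ m := by
          rw [sum_insert ha, add_left_comm, add_comm (p a)]
          linarith [pow_add_mul_le_add_pow hX (b := p a) (by positivity) m]

lemma sum_descWeight_le_of_subset_powerset {S : Finset α} {F : Finset (Finset α)}
    (hq : 0 ≤ q) (hp : ∀ i ∈ S, 0 ≤ p i) (hF : F ⊆ S.powerset) (m : ℕ) :
    ∑ f ∈ F, descWeight p q m f ≤ (q + ∑ i ∈ S, p i) ^ m := by
  classical
  calc ∑ f ∈ F, descWeight p q m f ≤ ∑ f ∈ S.powerset, descWeight p q m f :=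
        sum_le_sum_of_subset_of_nonneg hF fun f hf _ =>
          descWeight_nonneg hq fun i hi => hp i (mem_powerset.1 hf hi)
    _ ≤ (q + ∑ i ∈ S, p i) ^ m := sum_powerset_descWeight_le hq hp m

lemma sum_descWeight_le_of_forall_mem [DecidableEq α] {a : α} {S : Finset α}
    {F : Finset (Finset α)} (hq : 0 ≤ q) (hpa : 0 ≤ p a) (hp : ∀ i ∈ S, 0 ≤ p i)
    (hF : ∀ e ∈ F, a ∈ e ∧ e ⊆ insert a S) (m : ℕ) :
    ∑ e ∈ F, descWeight p q m e ≤ m * p a * (q + ∑ i ∈ S, p i) ^ (m - 1) := by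
  have hinj : Set.InjOn (fun e : Finset α => e.erase a) F := fun e he e' he' hee' => by
    rw [← insert_erase (hF e he).1, ← insert_erase (hF e' he').1]
    exact congrArg (insert a) hee'
  have hsub : F.image (fun e : Finset α => e.erase a) ⊆ S.powerset :=
    image_subset_iff.2 fun e he => mem_powerset.2 (subset_insert_iff.1 (hF e he).2)
  calc ∑ e ∈ F, descWeight p q m e
        = m * p a * ∑ e ∈ F, descWeight p q (m - 1) (e.erase a) := by
        rw [mul_sum]
        refine sum_congr rfl fun e he => ?_
        rw [← descWeight_insert (notMem_erase a e), insert_erase (hF e he).1]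
    _ = m * p a * ∑ f ∈ F.image (fun e : Finset α => e.erase a), descWeight p q (m - 1) f := by
        rw [sum_image hinj]
    _ ≤ m * p a * (q + ∑ i ∈ S, p i) ^ (m - 1) := by
        gcongr
        exact sum_descWeight_le_of_subset_powerset hq hp hsub (m - 1)

end descWeight

lemma wissWeight_eq_descWeight {r : ℕ} {p : ℕ → ℝ} {q : ℝ} {e : Finset ℕ} (he : #e ≤ r) :
    wissWeight r p q e = descWeight p q r e := by
  rw [wissWeight, descWeight, Nat.descFactorial_eq_div he, Nat.cast_div
    (Nat.factorial_dvd_factorial (Nat.sub_le r #e)) (by positivity)]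

-- AM-GM for `n` copies of `y` and one copy of `1 + n (1 - y)`, by Bernoulli's inequality for `y⁻¹`.
lemma pow_mul_one_add_mul_one_sub_le (n : ℕ) {y : ℝ} (hy : 0 ≤ y) :
    y ^ n * (1 + n * (1 - y)) ≤ 1 := by
  rcases hy.eq_or_lt with rfl | hy
  · cases n <;> simp
  have hbern := one_add_mul_sub_le_pow (a := y⁻¹) (by linarith [inv_pos.2 hy]) n
  have hy' : 1 - y ≤ y⁻¹ - 1 := by
    have := inv_pos.2 hy
    nlinarith [mul_inv_cancel₀ hy.ne', sq_nonneg (y - 1), mul_pos this this]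
  calc y ^ n * (1 + n * (1 - y)) ≤ y ^ n * (1 + n * (y⁻¹ - 1)) := by gcongr
    _ ≤ y ^ n * y⁻¹ ^ n := by gcongr
    _ = 1 := by rw [← mul_pow, mul_inv_cancel₀ hy.ne', one_pow]

lemma natCast_mul_mul_one_sub_pow_le (r : ℕ) {x : ℝ} (hx : x ≤ 1) :
    (r : ℝ) * x * (1 - x) ^ (r - 1) ≤ (1 - 1 / (r : ℝ)) ^ (r - 1) := by
  obtain _ | _ | n := r
  · simp
  · simpa using hx
  have hx' : 0 ≤ 1 - x := by linarith
  set y : ℝ := (n + 2) * (1 - x) / (n + 1) with hy_def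
  have hAMGM := pow_mul_one_add_mul_one_sub_le (n + 1) (y := y) (by positivity)
  simp only [Nat.add_sub_cancel]
  push_cast
  calc (n + 1 + 1 : ℝ) * x * (1 - x) ^ (n + 1)
      = ((n + 1) / (n + 2)) ^ (n + 1) * (y ^ (n + 1) * (1 + (n + 1 : ℕ) * (1 - y))) := by
        rw [hy_def, div_pow, div_pow, mul_pow]
        push_cast
        field_simp
        ring
    _ ≤ ((n + 1) / (n + 2)) ^ (n + 1) := mul_le_of_le_one_right (by positivity) hAMGM
    _ = (1 - 1 / (n + 1 + 1)) ^ (n + 1) := by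
        congr 1
        field_simp
        ring

theorem principal_wiss_weight_le_general (r s : ℕ)
    (G : Finset (Finset ℕ)) (p : ℕ → ℝ) (q : ℝ)
    (h : IsWISS r s G p q) (hprin : WISSPrincipal G) :
    wissTotal r p q G ≤ (r : ℝ) * p 1 * (1 - p 1) ^ (r - 1) ∧
    (r : ℝ) * p 1 * (1 - p 1) ^ (r - 1) ≤ (1 - 1 / (r : ℝ)) ^ (r - 1) := by
  obtain ⟨hs, hG, -, hp, ⟨hq, -⟩, hsum, -⟩ := h
  have hIcc : Icc 1 s = insert 1 (Icc 2 s) := by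
    ext i; simp only [mem_Icc, mem_insert]; omega
  obtain ⟨hp1, hp1'⟩ := hp 1 (by simp [hs])
  have hrest : q + ∑ i ∈ Icc 2 s, p i = 1 - p 1 := by
    rw [hIcc, sum_insert (by simp)] at hsum
    linarith
  refine ⟨?_, natCast_mul_mul_one_sub_pow_le r hp1'⟩
  calc wissTotal r p q G = ∑ e ∈ G, descWeight p q r e :=
        sum_congr rfl fun e he => wissWeight_eq_descWeight (hG e he).2.2
    _ ≤ r * p 1 * (q + ∑ i ∈ Icc 2 s, p i) ^ (r - 1) := by
        refine sum_descWeight_le_of_forall_mem hq hp1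
          (fun i hi => (hp i (Icc_subset_Icc_left one_le_two hi)).1)
          (fun e he => ⟨hprin e he, hIcc ▸ (hG e he).2.1⟩) r
    _ = r * p 1 * (1 - p 1) ^ (r - 1) := by rw [hrest]

theorem principal_wiss_weight_le (r s : ℕ) (hr : 2 ≤ r)
    (G : Finset (Finset ℕ)) (p : ℕ → ℝ) (q : ℝ)
    (h : IsWISS r s G p q) (hprin : WISSPrincipal G) :
    wissTotal r p q G ≤ (r : ℝ) * p 1 * (1 - p 1) ^ (r - 1) ∧
    (r : ℝ) * p 1 * (1 - p 1) ^ (r - 1) ≤ (1 - 1 / (r : ℝ)) ^ (r - 1) :=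
  principal_wiss_weight_le_general r s G p q h hprin
end

section
/- For every integer r ≥ 3, every intersecting r-graph is K_{r,r}^{(r)}-hom-free; that is, there is no homomorphism from K_{r,r}^{(r)} to any intersecting r-graph. -/
open Finset

/-!
Since the host graph is intersecting, the images of the two disjoint edges `e₁`, `e₂` of
`K_{r,r}^{(r)}` share a vertex, so `φ u = φ v` for some `u ∈ e₁`, `v ∈ e₂`. But `u` and `v`
lie together in the edge `{u, v} ∪ N_{u,v}`, on which `φ` must be injective.
-/

section Hypergraph

variable {α γ : Type*} [DecidableEq γ]

lemma exists_map_eq_of_image_mem_intersecting {F : Finset (Finset α)} {H : Finset (Finset γ)}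
    (hint : ∀ e ∈ H, ∀ f ∈ H, (e ∩ f).Nonempty) {φ : α → γ}
    (hφ : ∀ e ∈ F, e.image φ ∈ H) {e f : Finset α} (he : e ∈ F) (hf : f ∈ F) :
    ∃ u ∈ e, ∃ v ∈ f, φ u = φ v := by
  obtain ⟨x, hx⟩ := hint _ (hφ e he) _ (hφ f hf)
  obtain ⟨u, hu, rfl⟩ := mem_image.1 (mem_inter.1 hx).1
  obtain ⟨v, hv, hvu⟩ := mem_image.1 (mem_inter.1 hx).2
  exact ⟨u, hu, v, hv, hvu.symm⟩

theorem not_exists_hom_to_intersecting {F : Finset (Finset α)} {H : Finset (Finset γ)}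
    (hint : ∀ e ∈ H, ∀ f ∈ H, (e ∩ f).Nonempty) {e₁ e₂ : Finset α} (he₁ : e₁ ∈ F) (he₂ : e₂ ∈ F)
    (hcross : ∀ u ∈ e₁, ∀ v ∈ e₂, u ≠ v ∧ ∃ f ∈ F, u ∈ f ∧ v ∈ f) :
    ¬ ∃ φ : α → γ, ∀ e ∈ F, Set.InjOn φ ↑e ∧ e.image φ ∈ H := by
  rintro ⟨φ, hφ⟩
  obtain ⟨u, hu, v, hv, huv⟩ :=
    exists_map_eq_of_image_mem_intersecting hint (fun e he => (hφ e he).2) he₁ he₂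
  obtain ⟨hne, f, hf, huf, hvf⟩ := hcross u hu v hv
  exact hne ((hφ f hf).1 huf hvf huv)

end Hypergraph

section Krr

variable (r : ℕ)

lemma image_inl_mem_Krr (s : Fin 2) :
    (univ : Finset (Fin r)).image (fun i => (Sum.inl (s, i) : KrrV r)) ∈ Krr r := by
  fin_cases s <;> simp [Krr]

lemma exists_Krr_edge_mem_of_inl (i j : Fin r) :
    ∃ f ∈ Krr r, (Sum.inl (0, i) : KrrV r) ∈ f ∧ (Sum.inl (1, j) : KrrV r) ∈ f :=
  ⟨_, mem_union_right _ (mem_image_of_mem _ (mem_univ (i, j))), by simp, by simp⟩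

end Krr

theorem intersecting_is_Krr_hom_free_general (r : ℕ)
    {γ : Type*} [DecidableEq γ] (H : Finset (Finset γ))
    (hint : ∀ e ∈ H, ∀ f ∈ H, (e ∩ f).Nonempty) :
    ¬ ∃ φ : KrrV r → γ, ∀ e ∈ Krr r, Set.InjOn φ ↑e ∧ e.image φ ∈ H := by
  refine not_exists_hom_to_intersecting hint (image_inl_mem_Krr r 0) (image_inl_mem_Krr r 1) ?_
  simp only [mem_image, mem_univ, true_and]
  rintro _ ⟨i, rfl⟩ _ ⟨j, rfl⟩
  exact ⟨by simp, exists_Krr_edge_mem_of_inl r i j⟩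

theorem intersecting_is_Krr_hom_free (r : ℕ) (hr : 3 ≤ r)
    {γ : Type*} [DecidableEq γ] (H : Finset (Finset γ))
    (hunif : ∀ e ∈ H, e.card = r)
    (hint : ∀ e ∈ H, ∀ f ∈ H, (e ∩ f).Nonempty) :
    ¬ ∃ φ : KrrV r → γ, ∀ e ∈ Krr r, Set.InjOn φ ↑e ∧ e.image φ ∈ H :=
  intersecting_is_Krr_hom_free_general r H hint
end

section
/- Let r ≥ 3 and let H be an r-graph that covers pairs, i.e. every pair of distinct vertices of H is contained in some edge of H. If H contains two disjoint edges, then there is a homomorphism from K_{r,r}^{(r)} to H. -/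
/-!
Send the two disjoint edges `e₁, e₂` of `K_{r,r}^{(r)}` onto two disjoint edges `e, f` of `H`.
For `u ∈ e₁`, `v ∈ e₂` the images of `u` and `v` are distinct, so some edge of `H` contains both;
send `N_{u,v}` onto the remaining `r - 2` vertices of that edge. Every edge of `K_{r,r}^{(r)}` is
then mapped onto an edge of `H`, and since both have `r` vertices the map is injective on it.
-/

open Finset

theorem Finset.exists_image_univ_eq_of_card_eq {γ : Type*} [DecidableEq γ] {s : Finset γ} {n : ℕ}
    (h : s.card = n) : ∃ f : Fin n → γ, univ.image f = s :=
  ⟨fun i => (s.equivFinOfCardEq h).symm i, by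
    ext x
    simp only [mem_image, mem_univ, true_and]
    exact ⟨fun ⟨i, hi⟩ => hi ▸ Subtype.property _,
      fun hx => ⟨s.equivFinOfCardEq h ⟨x, hx⟩, by simp⟩⟩⟩

theorem Finset.exists_insert_insert_image_univ_eq {γ : Type*} [DecidableEq γ] {s : Finset γ}
    {a b : γ} {n : ℕ} (ha : a ∈ s) (hb : b ∈ s) (hab : a ≠ b) (h : s.card = n) :
    ∃ f : Fin (n - 2) → γ, insert a (insert b (univ.image f)) = s := by
  have hb' : b ∈ s.erase a := mem_erase.mpr ⟨hab.symm, hb⟩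
  obtain ⟨f, hf⟩ := exists_image_univ_eq_of_card_eq (s := (s.erase a).erase b) (n := n - 2)
    (by rw [card_erase_of_mem hb', card_erase_of_mem ha, h]; omega)
  exact ⟨f, by rw [hf, insert_erase hb', insert_erase ha]⟩

namespace Krr

variable {r : ℕ}

def side (r : ℕ) (s : Fin 2) : Finset (KrrV r) := univ.image fun i => Sum.inl (s, i)

def link (i j : Fin r) : Finset (KrrV r) :=
  insert (Sum.inl (0, i)) (insert (Sum.inl (1, j)) (univ.image fun k => Sum.inr ((i, j), k)))

theorem mem_iff {t : Finset (KrrV r)} :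
    t ∈ Krr r ↔ t = side r 0 ∨ t = side r 1 ∨ ∃ i j, t = link i j := by
  simp [Krr, side, link, eq_comm]

theorem card_side (s : Fin 2) : (side r s).card = r := by
  rw [side, card_image_of_injective _ (fun a b h => by simpa using h), card_univ, Fintype.card_fin]

theorem card_link (hr : 2 ≤ r) (i j : Fin r) : (link i j).card = r := by
  rw [link, card_insert_of_notMem (by simp), card_insert_of_notMem (by simp),
    card_image_of_injective _ (fun a b h => by simpa using h), card_univ, Fintype.card_fin]
  omega

theorem card_of_mem (hr : 2 ≤ r) {t : Finset (KrrV r)} (ht : t ∈ Krr r) : t.card = r := by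
  obtain rfl | rfl | ⟨i, j, rfl⟩ := mem_iff.mp ht
  · exact card_side 0
  · exact card_side 1
  · exact card_link hr i j

variable {γ : Type*} [DecidableEq γ]

def lift (A : Fin 2 → Fin r → γ) (N : Fin r → Fin r → Fin (r - 2) → γ) : KrrV r → γ :=
  Sum.elim (fun p => A p.1 p.2) (fun q => N q.1.1 q.1.2 q.2)

variable (A : Fin 2 → Fin r → γ) (N : Fin r → Fin r → Fin (r - 2) → γ)

theorem image_lift_side (s : Fin 2) : (side r s).image (lift A N) = univ.image (A s) := by
  simp [side, lift, image_image, Function.comp_def]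

theorem image_lift_link (i j : Fin r) :
    (link i j).image (lift A N) = insert (A 0 i) (insert (A 1 j) (univ.image (N i j))) := by
  simp [link, lift, image_insert, image_image, Function.comp_def]

end Krr

theorem injOn_of_image_mem_uniform {α γ : Type*} [DecidableEq γ] {H : Finset (Finset γ)} {r : ℕ}
    (hunif : ∀ e ∈ H, e.card = r) {φ : α → γ} {t : Finset α} (ht : t.card = r)
    (himage : t.image φ ∈ H) : Set.InjOn φ t :=
  injOn_of_card_image_eq (by rw [hunif _ himage, ht])

theorem covers_pairs_two_disjoint_edges_hom_Krr_general (r : ℕ) (hr : 3 ≤ r)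
    {γ : Type*} [DecidableEq γ] (H : Finset (Finset γ))
    (hunif : ∀ e ∈ H, e.card = r)
    (hcov : ∀ u v : γ, u ≠ v → ∃ e ∈ H, u ∈ e ∧ v ∈ e)
    (hdisj : ∃ e ∈ H, ∃ f ∈ H, e ≠ f ∧ Disjoint e f) :
    ∃ φ : KrrV r → γ, ∀ e ∈ Krr r, Set.InjOn φ ↑e ∧ e.image φ ∈ H := by
  obtain ⟨e, he, f, hf, -, hef⟩ := hdisj
  obtain ⟨A, rfl⟩ := exists_image_univ_eq_of_card_eq (hunif e he)
  obtain ⟨B, rfl⟩ := exists_image_univ_eq_of_card_eq (hunif f hf)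
  have hAB : ∀ i j, A i ≠ B j := fun i j h =>
    disjoint_left.mp hef (mem_image_of_mem A (mem_univ i)) (h ▸ mem_image_of_mem B (mem_univ j))
  choose g hgH hAg hBg using fun i j => hcov _ _ (hAB i j)
  choose N hN using fun i j =>
    exists_insert_insert_image_univ_eq (hAg i j) (hBg i j) (hAB i j) (hunif _ (hgH i j))
  have hφ : ∀ t ∈ Krr r, t.image (Krr.lift ![A, B] N) ∈ H := by
    intro t ht
    obtain rfl | rfl | ⟨i, j, rfl⟩ := Krr.mem_iff.mp ht
    · simpa [Krr.image_lift_side] using he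
    · simpa [Krr.image_lift_side] using hf
    · simpa [Krr.image_lift_link, hN] using hgH i j
  exact ⟨Krr.lift ![A, B] N, fun t ht =>
    ⟨injOn_of_image_mem_uniform hunif (Krr.card_of_mem (by omega) ht) (hφ t ht), hφ t ht⟩⟩

theorem covers_pairs_two_disjoint_edges_hom_Krr (r : ℕ) (hr : 3 ≤ r)
    {γ : Type*} [DecidableEq γ] [Fintype γ] (H : Finset (Finset γ))
    (hunif : ∀ e ∈ H, e.card = r)
    (hcov : ∀ u v : γ, u ≠ v → ∃ e ∈ H, u ∈ e ∧ v ∈ e)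
    (hdisj : ∃ e ∈ H, ∃ f ∈ H, e ≠ f ∧ Disjoint e f) :
    ∃ φ : KrrV r → γ, ∀ e ∈ Krr r, Set.InjOn φ ↑e ∧ e.image φ ∈ H :=
  covers_pairs_two_disjoint_edges_hom_Krr_general r hr H hunif hcov hdisj
end

section
/- For every integer r ≥ 4, (1/r!)·(1−1/r)^{r−1} > C(2r−1, r)/(2r−1)^r; that is, the limiting Lagrangian of the principal intersecting r-graphs S₁^{(r)}(n) exceeds the Lagrangian of the complete r-graph on 2r−1 vertices. -/
/-!
Multiplying by `r!`, the left side becomes `r (r+1) ⋯ (2r-1) / (2r-1)^r`. Pairing the factors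
`r + i` and `2r - 1 - i` and applying AM-GM bounds the product by `((3r-1)/2)^r`, so the left side
is at most `((3r-1)/(4r-2))^r / r!`. For `r ≥ 5` the ratio is at most `7/9`, and
`(7/9)^5 < e⁻¹ ≤ (1 - 1/r)^(r-1)`. The bound is too weak for `r = 4`, which is checked
directly.
-/

open Finset Real

theorem prod_range_add_le_pow {x : ℝ} (hx : 0 ≤ x) (k : ℕ) :
    ∏ i ∈ range k, (x + i) ≤ (x + (k - 1) / 2) ^ k := by
  -- AM-GM on the factors `x + i` and `x + (k - 1 - i)`, whose sum does not depend on `i`.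
  have hpair : ∀ i ∈ range k, (x + i) * (x + (k - 1 - i : ℕ)) ≤ (x + (k - 1) / 2) ^ 2 := by
    intro i hi
    have hik : i + 1 ≤ k := mem_range.mp hi
    rw [Nat.cast_sub (by omega), Nat.cast_sub (by omega), Nat.cast_one]
    nlinarith [sq_nonneg ((k : ℝ) - 1 - 2 * i)]
  have hsq : (∏ i ∈ range k, (x + i)) ^ 2 ≤ ((x + (k - 1) / 2) ^ k) ^ 2 := by
    calc (∏ i ∈ range k, (x + i)) ^ 2
        = ∏ i ∈ range k, (x + i) * (x + (k - 1 - i : ℕ)) := by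
          rw [prod_mul_distrib, prod_range_reflect (fun i : ℕ => x + i) k, sq]
      _ ≤ ∏ _i ∈ range k, (x + (k - 1) / 2) ^ 2 :=
          prod_le_prod (fun i _ => by positivity) hpair
      _ = ((x + (k - 1) / 2) ^ k) ^ 2 := by
          rw [prod_const, card_range, ← pow_mul, ← pow_mul, mul_comm]
  rcases k.eq_zero_or_pos with rfl | hk
  · simp
  · have : (0 : ℝ) ≤ x + (k - 1) / 2 := by
      have : (1 : ℝ) ≤ k := by exact_mod_cast hk
      linarith
    exact le_of_pow_le_pow_left₀ two_ne_zero (by positivity) hsq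

theorem choose_two_mul_sub_one_le (r : ℕ) :
    ((2 * r - 1).choose r : ℝ) ≤ ((3 * r - 1) / 2) ^ r / r.factorial := by
  have hasc : (r.factorial * (2 * r - 1).choose r : ℝ) = ∏ i ∈ range r, ((r : ℝ) + i) := by
    rw [two_mul]
    exact_mod_cast (Nat.ascFactorial_eq_factorial_mul_choose' r r).symm.trans
      (Nat.ascFactorial_eq_prod_range r r)
  rw [le_div_iff₀ (by positivity), mul_comm, hasc]
  refine (prod_range_add_le_pow (Nat.cast_nonneg r) r).trans_eq ?_
  ring

theorem exp_neg_one_le_one_sub_one_div_pow (n : ℕ) : exp (-1) ≤ (1 - 1 / n) ^ (n - 1) := by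
  rcases n with _ | m
  · simp
  · have h : (1 - 1 / ((m + 1 : ℕ) : ℝ)) ^ (m + 1 - 1) = ((1 + (m : ℝ)⁻¹) ^ m)⁻¹ := by
      rcases m.eq_zero_or_pos with rfl | hm
      · simp
      · rw [← inv_pow, Nat.add_sub_cancel]
        congr 1
        have : (m : ℝ) ≠ 0 := by positivity
        field_simp
        push_cast
        ring
    rw [h, exp_neg]
    exact inv_anti₀ (by positivity) one_add_inv_pow_le_exp

theorem seven_ninths_pow_five_lt_exp_neg_one : (7 / 9 : ℝ) ^ 5 < exp (-1) := by
  rw [exp_neg, lt_inv_comm₀ (by positivity) (exp_pos 1)]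
  calc exp 1 < 2.7182818286 := exp_one_lt_d9
    _ < ((7 / 9 : ℝ) ^ 5)⁻¹ := by norm_num

theorem choose_div_pow_le (r : ℕ) (hr : 1 ≤ r) :
    ((2 * r - 1).choose r : ℝ) / ((2 * r - 1 : ℕ) : ℝ) ^ r ≤
      1 / r.factorial * ((3 * r - 1) / (2 * (2 * r - 1))) ^ r := by
  have hcast : ((2 * r - 1 : ℕ) : ℝ) = 2 * r - 1 := by
    rw [Nat.cast_sub (by omega)]
    push_cast
    ring
  have hpos : (0 : ℝ) < 2 * r - 1 := by
    rw [← hcast]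
    exact_mod_cast (by omega : 0 < 2 * r - 1)
  rw [hcast]
  calc ((2 * r - 1).choose r : ℝ) / (2 * r - 1) ^ r
      ≤ ((3 * r - 1) / 2) ^ r / r.factorial / (2 * r - 1) ^ r := by
        gcongr
        exact choose_two_mul_sub_one_le r
    _ = 1 / r.factorial * ((3 * r - 1) / (2 * (2 * r - 1))) ^ r := by
        rw [← div_div, div_pow ((3 * r - 1 : ℝ) / 2)]
        ring

theorem three_mul_sub_one_div_pow_lt_exp_neg_one (r : ℕ) (hr : 5 ≤ r) :
    ((3 * r - 1) / (2 * (2 * r - 1)) : ℝ) ^ r < exp (-1) := by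
  have hrR : (5 : ℝ) ≤ r := by exact_mod_cast hr
  calc ((3 * r - 1) / (2 * (2 * r - 1)) : ℝ) ^ r
      ≤ (7 / 9) ^ r := by
        gcongr ?_ ^ r
        · exact div_nonneg (by linarith) (by linarith)
        · rw [div_le_div_iff₀ (by linarith) (by norm_num)]
          linarith
    _ ≤ (7 / 9) ^ 5 := pow_le_pow_of_le_one (by norm_num) (by norm_num) hr
    _ < exp (-1) := seven_ninths_pow_five_lt_exp_neg_one

theorem principal_beats_complete (r : ℕ) (hr : 4 ≤ r) :
    ((2 * r - 1).choose r : ℝ) / ((2 * r - 1 : ℕ) : ℝ) ^ r <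
      (1 / (r.factorial : ℝ)) * (1 - 1 / (r : ℝ)) ^ (r - 1) := by
  rcases hr.eq_or_lt with rfl | hr5
  · norm_num [Nat.choose, Nat.factorial]
  calc _ ≤ 1 / r.factorial * ((3 * r - 1) / (2 * (2 * r - 1)) : ℝ) ^ r :=
        choose_div_pow_le r (by omega)
    _ < 1 / r.factorial * (1 - 1 / r) ^ (r - 1) := by
        gcongr
        exact (three_mul_sub_one_div_pow_lt_exp_neg_one r hr5).trans_le
          (exp_neg_one_le_one_sub_one_div_pow r)
end
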